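/- arXiv:1902.08041 — 8 statements merged into one kernel-verified Lean document; each statement's English description precedes it below -/
import Mathlib

section
/- Let $W$ be a fixed $(t-1)$-dimensional subspace of $\mathbb{F}_q^k$ where $t \ge 1$ and $t+1 \le k$. The number of unordered pairs $\{V_1, V_2\}$ of distinct $t$-dimensional subspaces of $\mathbb{F}_q^k$, each containing $W$, such that $V_1 + V_2$ is a $(t+1)$-dimensional subspace containing $W$, equals $\frac{q}{2}\binom{k-t+1}{1}_q \binom{k-t}{1}_q = \frac{q(q^{k-t+1}-1)(q^{k-t}-1)}{2(q-1)^2}$. -/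
open Module

section Aux
variable (F : Type) [Field F] [Fintype F]

noncomputable def lineEquiv (Q : Type) [AddCommGroup Q] [Module F Q] [FiniteDimensional F Q] :
    {v : Q // v ≠ 0} ≃ Σ L : {L : Submodule F Q // finrank F L = 1}, {w : L.1 // w ≠ 0} where
  toFun v := ⟨⟨Submodule.span F {v.1}, finrank_span_singleton v.2⟩,
    ⟨⟨v.1, Submodule.mem_span_singleton_self _⟩, by simp [Subtype.ext_iff, v.2]⟩⟩
  invFun x := ⟨x.2.1.1, fun h => x.2.2 (Subtype.ext h)⟩
  left_inv v := rfl
  right_inv x := by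
    obtain ⟨⟨L, hL⟩, ⟨⟨w, hw⟩, hw0⟩⟩ := x
    have hwne : w ≠ 0 := fun h => hw0 (Subtype.ext h)
    have hspan : Submodule.span F {w} = L := by
      apply Submodule.eq_of_le_of_finrank_eq
      · rwa [Submodule.span_singleton_le_iff_mem]
      · rw [finrank_span_singleton hwne, hL]
    subst hspan
    rfl

lemma card_lines (Q : Type) [AddCommGroup Q] [Module F Q] [Fintype Q] :
    (Fintype.card F - 1) * Nat.card {L : Submodule F Q // finrank F L = 1}
    = Fintype.card F ^ finrank F Q - 1 := by
  classical
  have : Fintype (Submodule F Q) := Fintype.ofFinite _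
  have h := Nat.card_congr (lineEquiv F Q)
  rw [Nat.card_eq_fintype_card (α := Sigma _), Fintype.card_sigma] at h
  have hfib : ∀ L : {L : Submodule F Q // finrank F L = 1},
      Nat.card {w : L.1 // w ≠ 0} = Fintype.card F - 1 := by
    intro L
    have : Fintype.card L.1 = Fintype.card F ^ finrank F L.1 := card_eq_pow_finrank
    rw [Nat.card_eq_fintype_card, Fintype.card_subtype_compl, Fintype.card_subtype_eq,
      this, L.2, pow_one]
  simp only [← Nat.card_eq_fintype_card, hfib, Finset.sum_const, smul_eq_mul,
    Finset.card_univ] at h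
  have hv : Nat.card {v : Q // v ≠ 0} = Fintype.card F ^ finrank F Q - 1 := by
    rw [Nat.card_eq_fintype_card, Fintype.card_subtype_compl, Fintype.card_subtype_eq,
      card_eq_pow_finrank (K := F)]
  rw [hv] at h
  rw [mul_comm]
  exact (Nat.card_eq_fintype_card (α := F) ▸ h).symm

variable {M : Type} [AddCommGroup M] [Module F M] [FiniteDimensional F M]

lemma finrank_map_mkQ (W X : Submodule F M) (h : W ≤ X) :
    finrank F (X.map W.mkQ) + finrank F W = finrank F X := by
  have hr := LinearMap.finrank_range_add_finrank_ker (W.mkQ.comp X.subtype)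
  rw [LinearMap.range_comp, Submodule.range_subtype] at hr
  rw [LinearMap.ker_comp, Submodule.ker_mkQ] at hr
  have : finrank F (Submodule.comap X.subtype W) = finrank F W :=
    (Submodule.comapSubtypeEquivOfLe h).finrank_eq
  rw [this] at hr
  exact hr


noncomputable def coverEquiv (W : Submodule F M) :
    {L : Submodule F (M ⧸ W) // finrank F L = 1} ≃
      {V : Submodule F M // finrank F V = finrank F W + 1 ∧ W ≤ V} where
  toFun L := by
    refine ⟨Submodule.comap W.mkQ L.1, ?_, ?_⟩
    · have hle : W ≤ Submodule.comap W.mkQ L.1 := fun x hx => by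
        have h0 : W.mkQ x = 0 := (Submodule.Quotient.mk_eq_zero W).mpr hx
        exact Submodule.mem_comap.mpr (h0.symm ▸ L.1.zero_mem)
      have hmap : (Submodule.comap W.mkQ L.1).map W.mkQ = L.1 :=
        Submodule.map_comap_eq_of_surjective (Submodule.mkQ_surjective W) L.1
      have := finrank_map_mkQ F W _ hle
      have h2 : finrank F ↥((Submodule.comap W.mkQ L.1).map W.mkQ) = finrank F ↥L.1 :=
        congrArg (fun N : Submodule F (M ⧸ W) => finrank F N) hmap
      rw [h2, L.2] at this
      omega
    · exact fun x hx => by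
        have h0 : W.mkQ x = 0 := (Submodule.Quotient.mk_eq_zero W).mpr hx
        exact Submodule.mem_comap.mpr (h0.symm ▸ L.1.zero_mem)
  invFun V := ⟨V.1.map W.mkQ, by
    have := finrank_map_mkQ F W V.1 V.2.2
    rw [V.2.1] at this; omega⟩
  left_inv L := Subtype.ext (Submodule.map_comap_eq_of_surjective (Submodule.mkQ_surjective W) L.1)
  right_inv V := Subtype.ext (by
    show Submodule.comap W.mkQ (Submodule.map W.mkQ V.1) = V.1
    rw [Submodule.comap_map_eq, Submodule.ker_mkQ, sup_eq_left.mpr V.2.2])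

end Aux

/-- Let `W` be a fixed `(t-1)`-dimensional subspace of `𝔽_q^k` (with
`t ≥ 1`, `t + 1 ≤ k`). The number of unordered pairs `{V₁, V₂}` of distinct
`t`-dimensional subspaces, each containing `W`, such that `V₁ + V₂` is a
`(t+1)`-dimensional subspace containing `W`, equals
`q (q^(k-t+1) - 1)(q^(k-t) - 1) / (2 (q-1)²)`. -/
theorem stmt_5 (q k t : ℕ) (hq : IsPrimePow q) (ht : 1 ≤ t) (htk : t + 1 ≤ k)
    (F : Type) [Field F] [Fintype F] (hF : Fintype.card F = q)
    (W : Submodule F (Fin k → F)) (hW : Module.finrank F W = t - 1) :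
    Nat.card {s : Finset (Submodule F (Fin k → F)) //
        s.card = 2 ∧ (∀ V ∈ s, Module.finrank F V = t ∧ W ≤ V) ∧
        W ≤ s.sup id ∧ Module.finrank F ↥(s.sup id) = t + 1} =
      q * ((q ^ (k - t + 1) - 1) * (q ^ (k - t) - 1)) / (2 * (q - 1) ^ 2) := by
  classical
  have hq2 : 2 ≤ q := hq.two_le
  haveI : Fintype (Submodule F (Fin k → F)) := Fintype.ofFinite _
  set P : Submodule F (Fin k → F) → Prop := fun V => finrank F V = t ∧ W ≤ V with hP
  set A : Finset (Submodule F (Fin k → F)) := Finset.univ.filter P with hA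
  -- Step 1: the extra conditions are automatic
  have hcond : ∀ s : Finset (Submodule F (Fin k → F)),
      (s.card = 2 ∧ (∀ V ∈ s, finrank F V = t ∧ W ≤ V) ∧
        W ≤ s.sup id ∧ finrank F ↥(s.sup id) = t + 1)
      ↔ (s ∈ A.powersetCard 2) := by
    intro s
    rw [Finset.mem_powersetCard]
    have hsub : s ⊆ A ↔ ∀ V ∈ s, finrank F V = t ∧ W ≤ V := by
      simp [hA, Finset.subset_iff, hP]
    constructor
    · rintro ⟨h1, h2, _⟩; exact ⟨hsub.mpr h2, h1⟩
    · rintro ⟨hsA, h1⟩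
      have h2 := hsub.mp hsA
      obtain ⟨V1, V2, hne, rfl⟩ := Finset.card_eq_two.mp h1
      obtain ⟨hV1t, hWV1⟩ := h2 V1 (by simp)
      obtain ⟨hV2t, hWV2⟩ := h2 V2 (by simp)
      have hs : ({V1, V2} : Finset (Submodule F (Fin k → F))).sup id = V1 ⊔ V2 := by simp
      have hfr : finrank F ↥(({V1, V2} : Finset (Submodule F (Fin k → F))).sup id)
          = finrank F ↥(V1 ⊔ V2) :=
        congrArg (fun N : Submodule F (Fin k → F) => finrank F N) hs
      refine ⟨h1, h2, ?_, ?_⟩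
      · rw [hs]; exact hWV1.trans le_sup_left
      · rw [hfr]
        have hsum := Submodule.finrank_sup_add_finrank_inf_eq V1 V2
        have hWinf : W ≤ V1 ⊓ V2 := le_inf hWV1 hWV2
        have h3 : finrank F W ≤ finrank F ↥(V1 ⊓ V2) := Submodule.finrank_mono hWinf
        have h5 : finrank F ↥(V1 ⊓ V2) ≤ finrank F ↥V1 := Submodule.finrank_mono inf_le_left
        have h4 : finrank F ↥(V1 ⊓ V2) ≠ t := by
          intro h
          have he : V1 ⊓ V2 = V1 :=
            Submodule.eq_of_le_of_finrank_eq inf_le_left (by rw [h, hV1t])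
          have hle : V1 ≤ V2 := by rw [← he]; exact inf_le_right
          exact hne (Submodule.eq_of_le_of_finrank_eq hle (by rw [hV1t, hV2t]))
        rw [hW] at h3
        omega
  -- Step 2: the count is A.card choose 2
  have e1 := Equiv.subtypeEquivRight hcond
  have hcount : Nat.card {s : Finset (Submodule F (Fin k → F)) //
      s.card = 2 ∧ (∀ V ∈ s, finrank F V = t ∧ W ≤ V) ∧
      W ≤ s.sup id ∧ finrank F ↥(s.sup id) = t + 1} = A.card.choose 2 := by
    rw [Nat.card_congr e1, Nat.card_eq_fintype_card, Fintype.card_coe,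
      Finset.card_powersetCard]
  -- Step 3: A.card = number of lines in the quotient
  haveI : Fintype ((Fin k → F) ⧸ W) := Fintype.ofFinite _
  set N := A.card with hNdef
  have hNQ : N = Nat.card {L : Submodule F ((Fin k → F) ⧸ W) // finrank F L = 1} := by
    have e2 : {V : Submodule F (Fin k → F) // P V} ≃
        {V : Submodule F (Fin k → F) // finrank F V = finrank F W + 1 ∧ W ≤ V} :=
      Equiv.subtypeEquivRight (fun V => by
        constructor
        · rintro ⟨hv, hw⟩
          exact ⟨by rw [hW]; omega, hw⟩
        · rintro ⟨hv, hw⟩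
          rw [hW] at hv
          exact ⟨by omega, hw⟩)
    have hcc := Nat.card_congr ((coverEquiv F W).trans e2.symm)
    rw [hcc, Nat.card_eq_fintype_card, Fintype.card_subtype, hNdef, hA]
  -- finrank of the quotient
  have hfq : finrank F ((Fin k → F) ⧸ W) = k - t + 1 := by
    have h1 := Submodule.finrank_quotient_add_finrank W
    rw [hW, Module.finrank_fin_fun] at h1
    omega
  have hlines := card_lines F ((Fin k → F) ⧸ W)
  rw [hfq, hF, ← hNQ] at hlines
  -- hlines : (q - 1) * N = q ^ (k - t + 1) - 1
  -- Step 4: arithmetic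
  have hqpow : q ^ (k - t + 1) = q * q ^ (k - t) := by
    rw [pow_succ, mul_comm]
  have hqb : 1 ≤ q ^ (k - t) := Nat.one_le_pow _ _ (by omega)
  have hqa : q ≤ q ^ (k - t + 1) := by
    calc q = q * 1 := (mul_one q).symm
    _ ≤ q * q ^ (k - t) := Nat.mul_le_mul_left q hqb
    _ = q ^ (k - t + 1) := hqpow.symm
  have hN1 : 1 ≤ N := by
    by_contra h
    have : N = 0 := by omega
    rw [this, mul_zero] at hlines
    omega
  have h1 : N * (q - 1) = q ^ (k - t + 1) - 1 := by rw [mul_comm]; exact hlines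
  have h2 : (N - 1) * (q - 1) = q * (q ^ (k - t) - 1) := by
    have e : (N - 1) * (q - 1) = N * (q - 1) - (q - 1) := by rw [Nat.sub_mul, one_mul]
    rw [e, h1, Nat.mul_sub, mul_one, ← hqpow]
    omega
  have key : q * ((q ^ (k - t + 1) - 1) * (q ^ (k - t) - 1))
      = N * (N - 1) * (q - 1) ^ 2 := by
    calc q * ((q ^ (k - t + 1) - 1) * (q ^ (k - t) - 1))
        = (q ^ (k - t + 1) - 1) * (q * (q ^ (k - t) - 1)) := by ring
      _ = (N * (q - 1)) * ((N - 1) * (q - 1)) := by rw [h1, h2]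
      _ = N * (N - 1) * (q - 1) ^ 2 := by ring
  rw [hcount, Nat.choose_two_right, key]
  have hc : 0 < (q - 1) ^ 2 := by
    have h3 : 0 < q - 1 := by omega
    positivity
  rw [show N * (N - 1) * (q - 1) ^ 2 = (q - 1) ^ 2 * (N * (N - 1)) by ring]
  rw [show 2 * (q - 1) ^ 2 = (q - 1) ^ 2 * 2 by ring]
  rw [Nat.mul_div_mul_left _ _ hc]
end

section
/- Let $W$ be a fixed $(t-1)$-dimensional subspace of $\mathbb{F}_q^k$, and let $m, t$ be positive integers with $m + t \le k$. The number of unordered $(m+1)$-element sets $\{V_1, \dots, V_{m+1}\}$ of $t$-dimensional subspaces, each containing $W$, such that $\sum_{i=1}^{m+1} V_i$ is an $(m+t)$-dimensional subspace, equals $\binom{k-t+1}{m+1}_q \cdot \frac{\prod_{i=0}^{m}(q^{m+1} - q^i)}{(m+1)!\,(q-1)^{m+1}}$. -/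
/-!
Write `M = 𝔽_q^k` and `d = m + 1`. Subspaces of `M` containing `W` correspond to subspaces of
`M ⧸ W`, with dimensions shifted by `dim W`, so the sets to be counted are the sets of `d` lines
of `M ⧸ W` whose sum has dimension `d`. Ordering such a set and choosing a nonzero vector on each
line gives exactly the linearly independent `d`-tuples, so
(number of sets) · `d! (q-1)^d` = `∏_{i<d} (q^n - q^i)` with `n = dim M ⧸ W`.
Grouping the independent `d`-tuples by their span instead writes the same product as
(number of `d`-dimensional subspaces) · `∏_{i<d} (q^d - q^i)`; after cancelling powers of `q` this
identifies the number of `d`-dimensional subspaces with the `q`-binomial coefficient. The case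
`n = d` shows that `d! (q-1)^d` divides `∏_{i<d} (q^d - q^i)`, and the formula follows.
-/

/-- The Gaussian (q-)binomial coefficient as an exact quotient of products. -/
def gbinom (q a b : ℕ) : ℕ :=
  (∏ i ∈ Finset.range b, (q ^ (a - i) - 1)) / (∏ i ∈ Finset.range b, (q ^ (b - i) - 1))

open Module Submodule Finset

section Definitions

variable (K : Type*) {V : Type*} [DivisionRing K] [AddCommGroup V] [Module K V]

def IsIndependentLineSet (d : ℕ) (s : Finset (Submodule K V)) : Prop :=
  #s = d ∧ (∀ U ∈ s, finrank K U = 1) ∧ finrank K ↥(s.sup id) = d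

def IsIndependentLineTuple {d : ℕ} (L : Fin d → Submodule K V) : Prop :=
  (∀ i, finrank K (L i) = 1) ∧ finrank K ↥(⨆ i, L i) = d

end Definitions

theorem Nat.card_eq_card_mul_of_card_fiber {α β : Type*} [Finite α] [Finite β] (f : α → β)
    {c : ℕ} (h : ∀ b, Nat.card {a // f a = b} = c) : Nat.card α = Nat.card β * c := by
  have := Fintype.ofFinite β
  rw [← Nat.card_congr (Equiv.sigmaFiberEquiv f), Nat.card_sigma]
  simp [h, Nat.card_eq_fintype_card]

section Quotient

variable {K M : Type*} [DivisionRing K] [AddCommGroup M] [Module K M] [FiniteDimensional K M]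

theorem finrank_map_mkQ_add_finrank {W U : Submodule K M} (h : W ≤ U) :
    finrank K (U.map W.mkQ) + finrank K W = finrank K U := by
  have := LinearMap.finrank_range_add_finrank_ker (W.mkQ ∘ₗ U.subtype)
  rwa [LinearMap.range_comp, range_subtype, LinearMap.ker_comp, ker_mkQ,
    (comapSubtypeEquivOfLe h).finrank_eq] at this

theorem finrank_comap_mkQ (W : Submodule K M) (X : Submodule K (M ⧸ W)) :
    finrank K (X.comap W.mkQ) = finrank K X + finrank K W := by
  rw [← finrank_map_mkQ_add_finrank (le_comap_mkQ W X), map_comap_eq_self (by simp)]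

theorem finrank_finset_sup_comap_mkQ (W : Submodule K M) {s : Finset (Submodule K (M ⧸ W))}
    (hs : s.Nonempty) :
    finrank K ↥(s.sup (comap W.mkQ)) = finrank K ↥(s.sup id) + finrank K W := by
  obtain ⟨X, hX⟩ := hs
  have hW : W ≤ s.sup (comap W.mkQ) := (le_comap_mkQ W X).trans (le_sup (f := comap W.mkQ) hX)
  have hmap : (s.sup (comap W.mkQ)).map W.mkQ = s.sup id := by
    rw [apply_sup_eq_sup_comp _ (fun _ _ => Submodule.map_sup _ _ _) (map_bot _)]
    exact sup_congr rfl fun X _ => map_comap_eq_self (by simp)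
  rw [← finrank_map_mkQ_add_finrank hW, hmap]

theorem card_finset_supermodules_eq_card_isIndependentLineSet (W : Submodule K M) {d : ℕ}
    (hd : 0 < d) :
    Nat.card {s : Finset (Submodule K M) // #s = d ∧
        (∀ V ∈ s, finrank K V = finrank K W + 1 ∧ W ≤ V) ∧
        finrank K ↥(s.sup id) = finrank K W + d} =
      Nat.card {s : Finset (Submodule K (M ⧸ W)) // IsIndependentLineSet K d s} := by
  classical
  obtain ⟨c, hc⟩ : ∃ c : Submodule K (M ⧸ W) ↪ Submodule K M, ⇑c = comap W.mkQ :=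
    ⟨(comapMkQOrderEmbedding W).toEmbedding, rfl⟩
  have hcorr (s : Finset (Submodule K (M ⧸ W))) :
      (#(s.map c) = d ∧ (∀ V ∈ s.map c, finrank K V = finrank K W + 1 ∧ W ≤ V) ∧
        finrank K ↥((s.map c).sup id) = finrank K W + d) ↔ IsIndependentLineSet K d s := by
    simp only [IsIndependentLineSet, card_map, forall_mem_map]
    rw [sup_map, Function.id_comp, hc]
    simp only [finrank_comap_mkQ, le_comap_mkQ, and_true]
    refine and_congr_right fun hcard => and_congr (forall₂_congr fun X _ => by omega) ?_
    rw [finrank_finset_sup_comap_mkQ W (card_pos.1 (hcard ▸ hd))]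
    omega
  refine (Nat.card_congr (Equiv.ofBijective (fun s => ⟨s.1.map c, (hcorr _).2 s.2⟩) ⟨?_, ?_⟩)).symm
  · exact fun s t h => Subtype.ext (map_injective c (congrArg Subtype.val h))
  · rintro ⟨s, hs⟩
    have hpreimage : (s.image fun V => V.map W.mkQ).map c = s := by
      rw [map_eq_image, image_image]
      refine (image_congr fun V hV => ?_).trans image_id
      simp [hc, comap_map_mkQ, (hs.2.1 V hV).2]
    exact ⟨⟨_, (hcorr _).1 (hpreimage.symm ▸ hs)⟩, Subtype.ext hpreimage⟩

end Quotient

theorem finrank_finset_sup_le_sum {K V : Type*} [DivisionRing K] [AddCommGroup V] [Module K V]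
    [FiniteDimensional K V] (s : Finset (Submodule K V)) :
    finrank K ↥(s.sup id) ≤ ∑ U ∈ s, finrank K U := by
  classical
  induction s using Finset.induction_on with
  | empty => simp
  | insert U s hU ih =>
    rw [sup_insert, sum_insert hU]
    exact (finrank_add_le_finrank_add_finrank _ _).trans (Nat.add_le_add_left ih _)

theorem Finset.prod_range_pow_sub_pow (q r d : ℕ) (h : d ≤ r) :
    ∏ i ∈ range d, (q ^ r - q ^ i) = (∏ i ∈ range d, q ^ i) * ∏ i ∈ range d, (q ^ (r - i) - 1) := by
  rw [← prod_mul_distrib]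
  refine prod_congr rfl fun i hi => ?_
  rw [Nat.mul_sub, mul_one, ← pow_add, Nat.add_sub_of_le (by grind)]

section Lines

variable {K V : Type*} [DivisionRing K] [Fintype K] [AddCommGroup V] [Module K V] [Finite V]

theorem card_nonzero_of_finrank_eq_one {L : Submodule K V} (h : finrank K L = 1) :
    Nat.card {x : L // x ≠ 0} = Fintype.card K - 1 := by
  classical
  have := Fintype.ofFinite L
  rw [Nat.card_eq_fintype_card, Fintype.card_subtype_compl, Fintype.card_subtype_eq,
    card_eq_pow_finrank (K := K), h, pow_one]

theorem card_linearIndependent_eq_card_isIndependentLineTuple_mul (d : ℕ) :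
    Nat.card {v : Fin d → V // LinearIndependent K v} =
      Nat.card {L : Fin d → Submodule K V // IsIndependentLineTuple K L} *
        (Fintype.card K - 1) ^ d := by
  let lines (v : {v : Fin d → V // LinearIndependent K v}) :
      {L : Fin d → Submodule K V // IsIndependentLineTuple K L} :=
    ⟨fun i => K ∙ v.1 i, fun i => finrank_span_singleton (v.2.ne_zero i), by
      rw [← span_range_eq_iSup, finrank_span_eq_card v.2, Fintype.card_fin]⟩
  refine Nat.card_eq_card_mul_of_card_fiber lines fun L => ?_
  have hspan (x : ∀ i, {x : L.1 i // x ≠ 0}) (i : Fin d) : (K ∙ ((x i).1 : V)) = L.1 i :=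
    eq_of_le_of_finrank_eq ((span_singleton_le_iff_mem _ _).2 (x i).1.2)
      (by rw [finrank_span_singleton (by simpa using (x i).2), L.2.1 i])
  let e : {v // lines v = L} ≃ ∀ i, {x : L.1 i // x ≠ 0} :=
    { toFun v i := ⟨⟨v.1.1 i, congrFun (congrArg Subtype.val v.2) i ▸ mem_span_singleton_self _⟩,
        by simpa using v.1.2.ne_zero i⟩
      invFun x := ⟨⟨fun i => (x i).1, by
          rw [linearIndependent_iff_card_eq_finrank_span, Fintype.card_fin, Set.finrank,
            span_range_eq_iSup, iSup_congr (hspan x), L.2.2]⟩,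
        Subtype.ext (funext (hspan x))⟩ }
  rw [Nat.card_congr e, Nat.card_pi,
    prod_congr rfl fun i _ => card_nonzero_of_finrank_eq_one (L.2.1 i), prod_const, card_univ, Fintype.card_fin]

theorem IsIndependentLineTuple.card_image [DecidableEq (Submodule K V)] {d : ℕ}
    {L : Fin d → Submodule K V} (hL : IsIndependentLineTuple K L) : #(univ.image L) = d := by
  refine le_antisymm (card_image_le.trans_eq (by simp)) ?_
  calc d = finrank K ↥((univ.image L).sup id) := by
          rw [sup_image, Function.id_comp, sup_univ_eq_iSup, hL.2]
    _ ≤ ∑ U ∈ univ.image L, finrank K U := finrank_finset_sup_le_sum _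
    _ = #(univ.image L) := by
          rw [sum_congr rfl (g := fun _ => 1) (by simpa using hL.1), sum_const, smul_eq_mul,
            mul_one]

theorem IsIndependentLineTuple.injective {d : ℕ} {L : Fin d → Submodule K V}
    (hL : IsIndependentLineTuple K L) : Function.Injective L := by
  classical
  rw [← Set.injOn_univ, ← coe_univ, ← card_image_iff, hL.card_image, card_univ, Fintype.card_fin]

theorem card_isIndependentLineTuple_eq (d : ℕ) :
    Nat.card {L : Fin d → Submodule K V // IsIndependentLineTuple K L} =
      Nat.card {s : Finset (Submodule K V) // IsIndependentLineSet K d s} * d.factorial := by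
  classical
  let image (L : {L : Fin d → Submodule K V // IsIndependentLineTuple K L}) :
      {s : Finset (Submodule K V) // IsIndependentLineSet K d s} :=
    ⟨univ.image L.1, L.2.card_image, by simpa using L.2.1, by
      rw [sup_image, Function.id_comp, sup_univ_eq_iSup, L.2.2]⟩
  refine Nat.card_eq_card_mul_of_card_fiber image fun s => ?_
  have himage (e : Fin d ≃ s.1) : univ.image (fun i => (e i).1) = s.1 := by
    ext U; simpa using ⟨fun ⟨i, hi⟩ => hi ▸ (e i).2, fun hU => ⟨e.symm ⟨U, hU⟩, by simp⟩⟩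
  let e : {L // image L = s} ≃ (Fin d ≃ s.1) :=
    { toFun L := Equiv.ofBijective (fun i => ⟨L.1.1 i,
          congrArg Subtype.val L.2 ▸ mem_image_of_mem _ (mem_univ i)⟩)
        ((Fintype.bijective_iff_injective_and_card _).2
          ⟨fun i j hij => L.1.2.injective (congrArg Subtype.val hij), by simp [s.2.1]⟩)
      invFun e := ⟨⟨fun i => (e i).1, fun i => s.2.2.1 _ (e i).2, by
          rw [← sup_univ_eq_iSup, ← Function.id_comp (fun i => (e i).1), ← sup_image, himage,
            s.2.2.2]⟩,
        Subtype.ext (himage e)⟩ }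
  rw [Nat.card_congr e, Nat.card_eq_fintype_card,
    Fintype.card_equiv ((Finset.equivFinOfCardEq s.2.1).symm), Fintype.card_fin]

theorem card_isIndependentLineSet_mul {d : ℕ} (hd : d ≤ finrank K V) :
    Nat.card {s : Finset (Submodule K V) // IsIndependentLineSet K d s} *
        (d.factorial * (Fintype.card K - 1) ^ d) =
      ∏ i ∈ range d, (Fintype.card K ^ finrank K V - Fintype.card K ^ i) := by
  rw [← Fin.prod_univ_eq_prod_range (fun i => Fintype.card K ^ finrank K V - Fintype.card K ^ i),
    ← card_linearIndependent hd, card_linearIndependent_eq_card_isIndependentLineTuple_mul,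
    card_isIndependentLineTuple_eq, mul_assoc]

theorem card_finrank_eq_mul {d : ℕ} (hd : d ≤ finrank K V) :
    Nat.card {U : Submodule K V // finrank K U = d} *
        ∏ i ∈ range d, (Fintype.card K ^ d - Fintype.card K ^ i) =
      ∏ i ∈ range d, (Fintype.card K ^ finrank K V - Fintype.card K ^ i) := by
  let span (v : {v : Fin d → V // LinearIndependent K v}) :
      {U : Submodule K V // finrank K U = d} :=
    ⟨span K (Set.range v.1), by rw [finrank_span_eq_card v.2, Fintype.card_fin]⟩
  rw [← Fin.prod_univ_eq_prod_range (fun i => Fintype.card K ^ finrank K V - Fintype.card K ^ i),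
    ← card_linearIndependent hd]
  refine (Nat.card_eq_card_mul_of_card_fiber span fun U => ?_).symm
  let e : {v // span v = U} ≃ {w : Fin d → U.1 // LinearIndependent K w} :=
    { toFun v := ⟨fun i => ⟨v.1.1 i, congrArg Subtype.val v.2 ▸ subset_span ⟨i, rfl⟩⟩,
        .of_comp U.1.subtype v.1.2⟩
      invFun w := ⟨⟨U.1.subtype ∘ w.1, w.2.map' _ (ker_subtype _)⟩, Subtype.ext <| by
        refine eq_of_le_of_finrank_eq (span_le.2 ?_) ?_
        · rintro _ ⟨i, rfl⟩; exact (w.1 i).2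
        · rw [finrank_span_eq_card (w.2.map' _ (ker_subtype _)), Fintype.card_fin, U.2]⟩ }
  rw [Nat.card_congr e, card_linearIndependent (U.2.symm ▸ le_rfl), U.2,
    Fin.prod_univ_eq_prod_range (fun i => Fintype.card K ^ d - Fintype.card K ^ i)]

theorem card_finrank_eq_gbinom {d : ℕ} (hd : d ≤ finrank K V) :
    Nat.card {U : Submodule K V // finrank K U = d} = gbinom (Fintype.card K) (finrank K V) d := by
  have hq : 1 < Fintype.card K := Fintype.one_lt_card
  have hden : 0 < ∏ i ∈ range d, (Fintype.card K ^ (d - i) - 1) :=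
    prod_pos fun i hi => Nat.sub_pos_of_lt (Nat.one_lt_pow (by grind) hq)
  have hcount := card_finrank_eq_mul hd
  rw [prod_range_pow_sub_pow _ _ _ le_rfl, prod_range_pow_sub_pow _ _ _ hd, mul_left_comm] at hcount
  rw [gbinom, ← Nat.eq_of_mul_eq_mul_left (prod_pos fun i _ => by positivity) hcount,
    Nat.mul_div_cancel _ hden]

theorem card_isIndependentLineSet {d : ℕ} (hd : d ≤ finrank K V) :
    Nat.card {s : Finset (Submodule K V) // IsIndependentLineSet K d s} =
      gbinom (Fintype.card K) (finrank K V) d *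
        ((∏ i ∈ range d, (Fintype.card K ^ d - Fintype.card K ^ i)) /
          (d.factorial * (Fintype.card K - 1) ^ d)) := by
  have hden : 0 < d.factorial * (Fintype.card K - 1) ^ d :=
    Nat.mul_pos d.factorial_pos (pow_pos (Nat.sub_pos_of_lt Fintype.one_lt_card) d)
  have hmodel := card_isIndependentLineSet_mul (K := K) (V := Fin d → K) (d := d) (by simp)
  rw [finrank_fin_fun] at hmodel
  rw [← card_finrank_eq_gbinom hd, ← hmodel, Nat.mul_div_cancel _ hden]
  refine Nat.eq_of_mul_eq_mul_right hden ?_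
  rw [card_isIndependentLineSet_mul hd, mul_assoc, hmodel, card_finrank_eq_mul hd]

end Lines

theorem stmt_6_general (q k m t : ℕ) (ht : 1 ≤ t)
    (hmt : m + t ≤ k)
    (F : Type) [Field F] [Fintype F] (hF : Fintype.card F = q)
    (W : Submodule F (Fin k → F)) (hW : Module.finrank F W = t - 1) :
    Nat.card {s : Finset (Submodule F (Fin k → F)) //
        s.card = m + 1 ∧ (∀ V ∈ s, Module.finrank F V = t ∧ W ≤ V) ∧
        Module.finrank F ↥(s.sup id) = m + t} =
      gbinom q (k - t + 1) (m + 1) *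
        ((∏ i ∈ Finset.range (m + 1), (q ^ (m + 1) - q ^ i)) /
          (Nat.factorial (m + 1) * (q - 1) ^ (m + 1))) := by
  obtain rfl : t = finrank F W + 1 := by omega
  have hquot : finrank F ((Fin k → F) ⧸ W) = k - (finrank F W + 1) + 1 := by
    have := W.finrank_quotient_add_finrank
    rw [finrank_fin_fun] at this
    omega
  rw [show m + (finrank F W + 1) = finrank F W + (m + 1) by ring,
    card_finset_supermodules_eq_card_isIndependentLineSet W m.succ_pos,
    card_isIndependentLineSet (by omega), hquot, hF]

/-- Let `W` be a fixed `(t-1)`-dimensional subspace of `𝔽_q^k`, with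
`m + t ≤ k`. The number of unordered `(m+1)`-element sets `{V₁, …, V_{m+1}}` of
`t`-dimensional subspaces, each containing `W`, whose sum is an `(m+t)`-dimensional
subspace, equals `[k-t+1 choose m+1]_q · ∏_{i=0}^{m}(q^{m+1} - q^i) / ((m+1)! (q-1)^{m+1})`. -/
theorem stmt_6 (q k m t : ℕ) (hq : IsPrimePow q) (hm : 1 ≤ m) (ht : 1 ≤ t)
    (hmt : m + t ≤ k)
    (F : Type) [Field F] [Fintype F] (hF : Fintype.card F = q)
    (W : Submodule F (Fin k → F)) (hW : Module.finrank F W = t - 1) :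
    Nat.card {s : Finset (Submodule F (Fin k → F)) //
        s.card = m + 1 ∧ (∀ V ∈ s, Module.finrank F V = t ∧ W ≤ V) ∧
        Module.finrank F ↥(s.sup id) = m + t} =
      gbinom q (k - t + 1) (m + 1) *
        ((∏ i ∈ Finset.range (m + 1), (q ^ (m + 1) - q ^ i)) /
          (Nat.factorial (m + 1) * (q - 1) ^ (m + 1))) :=
  stmt_6_general q k m t ht hmt F hF W hW
end

section
/- Let $W$ be a $(t-1)$-dimensional subspace of $\mathbb{F}_q^k$ and let $R$ be a fixed $(t+1)$-dimensional subspace containing $W$, with $m + t + 2 \le k$. The number of unordered $(m+1)$-element sets $\{T_1, \dots, T_{m+1}\}$ of $t$-dimensional subspaces containing $W$ (each of the form $W \oplus T_i$ for some 1-dimensional $T_i$) such that $R \oplus T_1 \oplus \cdots \oplus T_{m+1}$ is an $(m+t+2)$-dimensional subspace equals $\frac{1}{(m+1)!}\, q^{\frac{(m+1)(m+4)}{2}} \prod_{i=1}^{m+1} \binom{k-t-i}{1}_q$. -/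
/-!
Write each `Vᵢ` as `W ⊕ ⟨vᵢ⟩` and choose the `Vᵢ` one at a time. The rank condition holds exactly
when each new `V` is not contained in the span `X` of `R` and the earlier ones, which has dimension
`t + j` at step `j`. Such a `V` meets `X` exactly in `W`, so the vectors `v` with `W ⊕ ⟨v⟩ = V` are
the `q^t - q^(t-1)` vectors of `V \ W`, and as `V` varies these are precisely the vectors outside
`X`. Hence step `j` offers `(q^k - q^(t+j)) / (q^t - q^(t-1)) = q^(j+2) [k-t-j-1]_q` choices.
Admissible tuples are automatically injective, and each set arises from `(m+1)!` of them.
-/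

open Finset Function Module Submodule
open scoped Nat

theorem Nat.card_sigma_of_forall_card_eq {α : Type*} {β : α → Type*} [Finite α]
    [∀ a, Finite (β a)] (c : ℕ) (h : ∀ a, Nat.card (β a) = c) :
    Nat.card (Σ a, β a) = Nat.card α * c := by
  have := Fintype.ofFinite α
  rw [Nat.card_sigma, sum_congr rfl fun a _ => h a, sum_const, Finset.card_univ, smul_eq_mul,
    Nat.card_eq_fintype_card]

theorem Nat.card_subtype_snoc {α : Type*} [Finite α] {n : ℕ} {P : (Fin (n + 1) → α) → Prop}
    {P' : (Fin n → α) → Prop} {Q : (Fin n → α) → α → Prop} (c : ℕ)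
    (hP : ∀ g a, P (Fin.snoc g a) ↔ P' g ∧ Q g a) (hQ : ∀ g, P' g → Nat.card {a // Q g a} = c) :
    Nat.card {f // P f} = Nat.card {g // P' g} * c := by
  have hinit (f : {f // P f}) := (hP _ _).mp (by rw [Fin.snoc_init_self]; exact f.2)
  let e : {f // P f} ≃ Σ g : {g // P' g}, {a // Q g a} :=
    { toFun f := ⟨⟨Fin.init f.1, (hinit f).1⟩, ⟨f.1 (Fin.last n), (hinit f).2⟩⟩
      invFun p := ⟨Fin.snoc p.1.1 p.2.1, (hP _ _).mpr ⟨p.1.2, p.2.2⟩⟩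
      left_inv f := Subtype.ext (Fin.snoc_init_self _)
      right_inv p :=
        Sigma.subtype_ext (Subtype.ext (Fin.init_snoc (α := fun _ => α) _ _)) (by simp) }
  exact (Nat.card_congr e).trans
    (Nat.card_sigma_of_forall_card_eq (β := fun g : {g // P' g} => {a // Q g a}) c
      fun g => hQ g.1 g.2)

theorem Nat.card_embedding_map_univ_eq (n : ℕ) {α : Type*} {s : Finset α} (hs : #s = n) :
    Nat.card {f : Fin n ↪ α // univ.map f = s} = n ! := by
  let e : {f : Fin n ↪ α // univ.map f = s} ≃ (Fin n ≃ s) :=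
    { toFun f := Equiv.ofBijective
        (fun i => ⟨f.1 i, (Finset.ext_iff.mp f.2 _).mp (mem_map_of_mem _ (mem_univ i))⟩)
        ⟨fun i j h => f.1.injective (congrArg Subtype.val h), fun y => by
          obtain ⟨i, -, hi⟩ := mem_map.mp ((Finset.ext_iff.mp f.2 _).mpr y.2)
          exact ⟨i, Subtype.ext hi⟩⟩
      invFun e := ⟨e.toEmbedding.trans (Embedding.subtype _), by
        ext x
        simp only [mem_map, mem_univ, true_and, Embedding.trans_apply, Equiv.coe_toEmbedding,
          Embedding.subtype_apply]
        exact ⟨by rintro ⟨i, rfl⟩; exact (e i).2, fun hx => ⟨e.symm ⟨x, hx⟩, by simp⟩⟩⟩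
      left_inv f := rfl
      right_inv e := Equiv.ext fun i => rfl }
  classical
  rw [Nat.card_congr e, Nat.card_eq_fintype_card,
    Fintype.card_equiv (s.equivFinOfCardEq hs).symm, Fintype.card_fin]

theorem Nat.card_finset_mul_factorial {α : Type*} [Finite α] (P : Finset α → Prop) (n : ℕ) :
    Nat.card {s : Finset α // #s = n ∧ P s} * n ! = Nat.card {f : Fin n ↪ α // P (univ.map f)} := by
  let π : {f : Fin n ↪ α // P (univ.map f)} → {s : Finset α // #s = n ∧ P s} :=
    fun f => ⟨univ.map f.1, by simp, f.2⟩
  rw [← Nat.card_congr (Equiv.sigmaFiberEquiv π), Nat.card_sigma_of_forall_card_eq]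
  rintro ⟨s, hs, hPs⟩
  rw [← Nat.card_embedding_map_univ_eq n hs]
  exact Nat.card_congr ((Equiv.subtypeEquivRight fun f => Subtype.ext_iff).trans
    (Equiv.subtypeSubtypeEquivSubtype (q := fun f => univ.map f = s) fun h => h.symm ▸ hPs))

theorem iSup_snoc {α : Type*} [CompleteLattice α] {n : ℕ} (g : Fin n → α) (a : α) :
    ⨆ i, (Fin.snoc g a : Fin (n + 1) → α) i = (⨆ i, g i) ⊔ a := by
  simp [← Finset.sup_univ_eq_iSup, Fin.univ_castSuccEmb, sup_comm]

theorem CovBy.inf_eq_of_not_le {α : Type*} [Lattice α] {a b c : α} (h : a ⋖ b) (hac : a ≤ c)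
    (hbc : ¬ b ≤ c) : b ⊓ c = a :=
  (h.eq_or_eq (le_inf h.le hac) inf_le_left).resolve_right fun h' => hbc (h' ▸ inf_le_right)

section Rank

variable {F E : Type*} [DivisionRing F] [AddCommGroup E] [Module F E] {W X V : Submodule F E}

theorem sup_span_singleton_eq_of_covBy (h : W ⋖ V) {v : E} (hvV : v ∈ V) (hvW : v ∉ W) :
    W ⊔ span F {v} = V :=
  (h.eq_or_eq le_sup_left (sup_le h.le ((span_singleton_le_iff_mem v V).mpr hvV))).resolve_left
    fun h' => hvW (h' ▸ mem_sup_right (mem_span_singleton_self v))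

variable [FiniteDimensional F E]

theorem covBy_iff_finrank_eq_succ : W ⋖ V ↔ W ≤ V ∧ finrank F V = finrank F W + 1 := by
  constructor
  · intro h
    obtain ⟨v, hvV, hvW⟩ := SetLike.exists_of_lt h.lt
    rw [← sup_span_singleton_eq_of_covBy h hvV hvW]
    exact ⟨le_sup_left, finrank_sup_span_singleton hvW⟩
  · rintro ⟨hWV, hV⟩
    refine ⟨hWV.lt_of_ne (by rintro rfl; omega), fun U hWU hUV => ?_⟩
    have := finrank_lt_finrank_of_lt hWU
    have := finrank_lt_finrank_of_lt hUV
    omega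

theorem finrank_sup_of_covBy_of_not_le (hWX : W ≤ X) (h : W ⋖ V) (hVX : ¬ V ≤ X) :
    finrank F ↥(X ⊔ V) = finrank F X + 1 := by
  have hcov : X ⋖ V ⊔ X := covBy_sup_of_inf_covBy_left (h.inf_eq_of_not_le hWX hVX ▸ h)
  rw [sup_comm]
  exact (covBy_iff_finrank_eq_succ.mp hcov).2

theorem finrank_sup_le_of_covBy (hWX : W ≤ X) (h : W ⋖ V) :
    finrank F ↥(X ⊔ V) ≤ finrank F X + 1 := by
  by_cases hVX : V ≤ X
  · rw [sup_eq_left.mpr hVX]; omega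
  · exact (finrank_sup_of_covBy_of_not_le hWX h hVX).le

theorem finrank_sup_finset_sup_le (hWX : W ≤ X) (s : Finset (Submodule F E))
    (hs : ∀ V ∈ s, W ⋖ V) : finrank F ↥(X ⊔ s.sup id) ≤ finrank F X + #s := by
  classical
  induction s using Finset.induction with
  | empty => simp [finrank_mono]
  | insert V s hVs ih =>
    rw [sup_insert, id, sup_comm V, ← sup_assoc, card_insert_of_notMem hVs]
    have := finrank_sup_le_of_covBy (X := X ⊔ s.sup id) (hWX.trans le_sup_left)
      (hs V (mem_insert_self V s))
    have := ih fun V hV => hs V (mem_insert_of_mem hV)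
    omega

end Rank

theorem gbinom_one_mul (q n : ℕ) : gbinom q n 1 * (q - 1) = q ^ n - 1 := by
  simpa [gbinom] using Nat.div_mul_cancel (by simpa using Nat.sub_dvd_pow_sub_pow q 1 n)

section Count

variable {F E : Type*} [DivisionRing F] [Finite F] [AddCommGroup E] [Module F E]
  [FiniteDimensional F E] {W X : Submodule F E}

theorem Submodule.ncard_coe_eq_pow_finrank (V : Submodule F E) :
    (V : Set E).ncard = Nat.card F ^ finrank F V := by
  rw [← Nat.card_coe_set_eq]
  exact Module.natCard_eq_pow_finrank (K := F) (V := V)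

theorem natCard_covBy_not_le_mul (hWX : W ≤ X) :
    Nat.card {V : Submodule F E // W ⋖ V ∧ ¬ V ≤ X} *
      (Nat.card F ^ (finrank F W + 1) - Nat.card F ^ finrank F W) =
    Nat.card F ^ finrank F E - Nat.card F ^ finrank F X := by
  have : Finite E := Module.finite_of_finite F
  let toCover : ↥(X : Set E)ᶜ → {V : Submodule F E // W ⋖ V ∧ ¬ V ≤ X} := fun v =>
    ⟨W ⊔ span F {v.1}, sup_comm (span F {v.1}) W ▸ covBy_span_singleton_sup fun h => v.2 (hWX h),
      fun h => v.2 (h (mem_sup_right (mem_span_singleton_self _)))⟩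
  have hfiber : ∀ V, Nat.card {v // toCover v = V} =
      Nat.card F ^ (finrank F W + 1) - Nat.card F ^ finrank F W := by
    rintro ⟨V, hWV, hVX⟩
    have hmem : ∀ v, toCover v = ⟨V, hWV, hVX⟩ ↔ v.1 ∈ V ∧ v.1 ∉ W := fun v => by
      refine ⟨fun h => ⟨?_, fun hv => v.2 (hWX hv)⟩,
        fun h => Subtype.ext (sup_span_singleton_eq_of_covBy hWV h.1 h.2)⟩
      have h : W ⊔ span F {v.1} = V := congrArg Subtype.val h
      rw [← h]
      exact mem_sup_right (mem_span_singleton_self _)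
    have e : {v // toCover v = ⟨V, hWV, hVX⟩} ≃ ↥((V : Set E) \ W) :=
      (Equiv.subtypeEquivRight hmem).trans (Equiv.subtypeSubtypeEquivSubtype
        (q := fun x => x ∈ V ∧ x ∉ W) fun h hX =>
          h.2 (hWV.inf_eq_of_not_le hWX hVX ▸ mem_inf.mpr ⟨h.1, hX⟩))
    rw [Nat.card_congr e, Nat.card_coe_set_eq, Set.ncard_sdiff (SetLike.coe_subset_coe.mpr hWV.le),
      V.ncard_coe_eq_pow_finrank, W.ncard_coe_eq_pow_finrank,
      (covBy_iff_finrank_eq_succ.mp hWV).2]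
  rw [← Nat.card_sigma_of_forall_card_eq _ hfiber, Nat.card_congr (Equiv.sigmaFiberEquiv toCover),
    Nat.card_coe_set_eq, Set.ncard_compl, X.ncard_coe_eq_pow_finrank,
    Module.natCard_eq_pow_finrank (K := F)]

theorem natCard_covBy_not_le (hWX : W ≤ X) :
    Nat.card {V : Submodule F E // W ⋖ V ∧ ¬ V ≤ X} =
      Nat.card F ^ (finrank F X - finrank F W) *
        gbinom (Nat.card F) (finrank F E - finrank F X) 1 := by
  have hq : 1 < Nat.card F := Finite.one_lt_card
  have hmul := natCard_covBy_not_le_mul hWX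
  set q := Nat.card F
  set w := finrank F W
  set s := finrank F X
  have hws : w ≤ s := finrank_mono hWX
  have hsN : s ≤ finrank F E := X.finrank_le
  have hN : q ^ finrank F E - q ^ s = q ^ w * (q ^ (s - w) * (q ^ (finrank F E - s) - 1)) := by
    rw [Nat.mul_sub_one, Nat.mul_sub, ← pow_add, ← pow_add, ← pow_add]
    congr 2 <;> omega
  rw [pow_succ, ← Nat.mul_sub_one, hN, ← gbinom_one_mul] at hmul
  refine Nat.eq_of_mul_eq_mul_right (m := q ^ w * (q - 1))
    (Nat.mul_pos (by positivity) (by omega)) ?_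
  linear_combination hmul

end Count

section Tuples

variable {F E : Type*} [DivisionRing F] [AddCommGroup E] [Module F E] {W R : Submodule F E} {n : ℕ}

/-- The `f i` are the paper's `Vᵢ = W ⊕ Tᵢ` (`W ⋖ Vᵢ` means `dim Tᵢ = 1`), and the rank condition
says that the sum `R ⊕ T₁ ⊕ ⋯ ⊕ Tₙ` is direct. -/
def IndepCovers (W R : Submodule F E) (f : Fin n → Submodule F E) : Prop :=
  (∀ i, W ⋖ f i) ∧ finrank F ↥(R ⊔ ⨆ i, f i) = finrank F R + n

variable [FiniteDimensional F E]

theorem finrank_sup_iSup_le [DecidableEq (Submodule F E)] (hWR : W ≤ R)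
    {f : Fin n → Submodule F E} (hf : ∀ i, W ⋖ f i) :
    finrank F ↥(R ⊔ ⨆ i, f i) ≤ finrank F R + #(univ.image f) := by
  rw [← sup_univ_eq_iSup, ← Function.id_comp f, ← sup_image]
  exact finrank_sup_finset_sup_le hWR _ (by simpa using hf)

theorem IndepCovers.injective (hWR : W ≤ R) {f : Fin n → Submodule F E}
    (hf : IndepCovers W R f) : Injective f := by
  classical
  have := finrank_sup_iSup_le hWR hf.1
  have hcard : #(univ.image f) = #(univ : Finset (Fin n)) :=
    le_antisymm card_image_le (by rw [card_univ, Fintype.card_fin]; linarith [hf.2])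
  simpa using card_image_iff.mp hcard

theorem indepCovers_snoc (hWR : W ≤ R) {g : Fin n → Submodule F E} {V : Submodule F E} :
    IndepCovers W R (Fin.snoc g V : Fin (n + 1) → Submodule F E) ↔
      IndepCovers W R g ∧ (W ⋖ V ∧ ¬ V ≤ R ⊔ ⨆ i, g i) := by
  classical
  simp only [IndepCovers, Fin.forall_fin_succ', Fin.snoc_castSucc, Fin.snoc_last]
  rw [iSup_snoc, ← sup_assoc]
  constructor
  · rintro ⟨⟨hg, hWV⟩, hrank⟩
    have := finrank_sup_iSup_le hWR hg
    have := card_image_le (s := univ) (f := g)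
    have := finrank_sup_le_of_covBy (X := R ⊔ ⨆ i, g i) (hWR.trans le_sup_left) hWV
    rw [card_univ, Fintype.card_fin] at *
    refine ⟨⟨hg, by omega⟩, hWV, fun hVX => ?_⟩
    rw [sup_eq_left.mpr hVX] at hrank
    omega
  · rintro ⟨⟨hg, hrank⟩, hWV, hVX⟩
    refine ⟨⟨hg, hWV⟩, ?_⟩
    rw [finrank_sup_of_covBy_of_not_le (hWR.trans le_sup_left) hWV hVX, hrank, add_assoc]

end Tuples

section OrderedCount

variable {F E : Type*} [DivisionRing F] [Finite F] [AddCommGroup E] [Module F E]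
  [FiniteDimensional F E] {W R : Submodule F E}

theorem natCard_indepCovers (hWR : W ≤ R) (n : ℕ) :
    Nat.card {f : Fin n → Submodule F E // IndepCovers W R f} =
      ∏ i ∈ range n, Nat.card F ^ (finrank F R - finrank F W + i) *
        gbinom (Nat.card F) (finrank F E - finrank F R - i) 1 := by
  have : Finite E := Module.finite_of_finite F
  have hwr : finrank F W ≤ finrank F R := finrank_mono hWR
  induction n with
  | zero =>
    have hempty : IndepCovers W R finZeroElim :=
      ⟨finZeroElim, by rw [iSup_of_empty, sup_bot_eq, add_zero]⟩
    rw [prod_range_zero, Nat.card_eq_one_iff_unique]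
    exact ⟨inferInstance, ⟨⟨finZeroElim, hempty⟩⟩⟩
  | succ n ih =>
    rw [prod_range_succ, ← ih]
    refine Nat.card_subtype_snoc _ (fun g V => indepCovers_snoc hWR) fun g hg => ?_
    rw [natCard_covBy_not_le (hWR.trans le_sup_left), hg.2]
    congr 2 <;> omega

theorem natCard_finset_covBy_mul_factorial (hWR : W ≤ R) (n : ℕ) :
    Nat.card {s : Finset (Submodule F E) //
        #s = n ∧ (∀ V ∈ s, W ⋖ V) ∧ finrank F ↥(R ⊔ s.sup id) = finrank F R + n} * n ! =
      Nat.card {f : Fin n → Submodule F E // IndepCovers W R f} := by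
  have : Finite E := Module.finite_of_finite F
  have hmap (f : Fin n ↪ Submodule F E) : ((∀ V ∈ univ.map f, W ⋖ V) ∧
      finrank F ↥(R ⊔ (univ.map f).sup id) = finrank F R + n) ↔ IndepCovers W R f := by
    rw [sup_map, Function.id_comp, sup_univ_eq_iSup]
    simp [IndepCovers]
  rw [Nat.card_finset_mul_factorial]
  exact Nat.card_congr
    { toFun f := ⟨f.1, (hmap f.1).mp f.2⟩
      invFun f := ⟨⟨f.1, f.2.injective hWR⟩, (hmap _).mpr f.2⟩
      left_inv _ := rfl
      right_inv _ := rfl }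

end OrderedCount

theorem stmt_7_general (q k m t : ℕ) (ht : 1 ≤ t)
    (F : Type) [Field F] [Fintype F] (hF : Fintype.card F = q)
    (W : Submodule F (Fin k → F)) (hW : Module.finrank F W = t - 1)
    (R : Submodule F (Fin k → F)) (hWR : W ≤ R) (hR : Module.finrank F R = t + 1) :
    Nat.card {s : Finset (Submodule F (Fin k → F)) //
        s.card = m + 1 ∧ (∀ V ∈ s, Module.finrank F V = t ∧ W ≤ V) ∧
        Module.finrank F ↥(R ⊔ s.sup id) = m + t + 2} =
      (q ^ ((m + 1) * (m + 4) / 2) *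
        ∏ i ∈ Finset.range (m + 1), gbinom q (k - t - (i + 1)) 1) /
        Nat.factorial (m + 1) := by
  subst hF
  have hcov (V : Submodule F (Fin k → F)) : finrank F V = t ∧ W ≤ V ↔ W ⋖ V := by
    rw [covBy_iff_finrank_eq_succ, hW, Nat.sub_add_cancel ht, and_comm]
  have hexp : ∑ i ∈ range (m + 1), (2 + i) = (m + 1) * (m + 4) / 2 := by
    have := sum_range_id_mul_two (m + 1)
    have : (m + 1) * (m + 4) = (m + 1) * (m + 1 - 1) + 4 * (m + 1) := by simp; ring
    rw [sum_add_distrib, sum_const, card_range, smul_eq_mul]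
    omega
  have hcount := natCard_finset_covBy_mul_factorial hWR (m + 1)
  rw [natCard_indepCovers hWR, finrank_fin_fun, hW, hR, show t + 1 - (t - 1) = 2 by omega,
    prod_mul_distrib, prod_pow_eq_pow_sum, hexp, show t + 1 + (m + 1) = m + t + 2 by omega]
    at hcount
  rw [← Nat.card_eq_fintype_card]
  simp only [hcov]
  refine Nat.eq_div_of_mul_eq_left (Nat.factorial_ne_zero _) (hcount.trans ?_)
  congr 1
  exact prod_congr rfl fun i _ => by rw [Nat.sub_sub, Nat.sub_sub, Nat.add_right_comm, add_assoc]

/-- Let `W` be a `(t-1)`-dimensional subspace of `𝔽_q^k` and `R` a fixed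
`(t+1)`-dimensional subspace containing `W`, with `m + t + 2 ≤ k`. The number of
unordered `(m+1)`-element sets `{V₁, …, V_{m+1}}` of `t`-dimensional subspaces
containing `W` such that `R + ∑ Vᵢ` has dimension `m + t + 2` equals
`(1/(m+1)!) q^((m+1)(m+4)/2) ∏_{i=1}^{m+1} [k-t-i choose 1]_q`. -/
theorem stmt_7 (q k m t : ℕ) (hq : IsPrimePow q) (hm : 1 ≤ m) (ht : 1 ≤ t)
    (hk : m + t + 2 ≤ k)
    (F : Type) [Field F] [Fintype F] (hF : Fintype.card F = q)
    (W : Submodule F (Fin k → F)) (hW : Module.finrank F W = t - 1)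
    (R : Submodule F (Fin k → F)) (hWR : W ≤ R) (hR : Module.finrank F R = t + 1) :
    Nat.card {s : Finset (Submodule F (Fin k → F)) //
        s.card = m + 1 ∧ (∀ V ∈ s, Module.finrank F V = t ∧ W ≤ V) ∧
        Module.finrank F ↥(R ⊔ s.sup id) = m + t + 2} =
      (q ^ ((m + 1) * (m + 4) / 2) *
        ∏ i ∈ Finset.range (m + 1), gbinom q (k - t - (i + 1)) 1) /
        Nat.factorial (m + 1) :=
  stmt_7_general q k m t ht F hF W hW R hWR hR
end

section
/- Let $W$ be a $(t-1)$-dimensional subspace of $\mathbb{F}_q^k$ and $S$ a fixed $(m+t)$-dimensional subspace containing $W$, with $m + t + 2 \le k$. The number of unordered pairs $\{V_1, V_2\}$ of $t$-dimensional subspaces containing $W$ such that $S + V_1 + V_2$ has dimension $m+t+2$ equals $\frac{q^{2m+3}}{2}\binom{k-m-t}{1}_q \binom{k-m-t-1}{1}_q$. -/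
set_option linter.unusedSectionVars false
set_option linter.unusedVariables false
attribute [local instance] Classical.propDecidable

open Module Submodule Finset

variable {F : Type} [Field F] [Fintype F] {k : ℕ}

noncomputable instance : Fintype (Submodule F (Fin k → F)) := by
  haveI : Finite (Submodule F (Fin k → F)) :=
    Finite.of_injective (fun U : Submodule F (Fin k → F) => (U : Set (Fin k → F)))
      SetLike.coe_injective
  exact Fintype.ofFinite _

lemma card_sub (U : Submodule F (Fin k → F)) :
    Fintype.card U = Fintype.card F ^ finrank F U :=
  card_eq_pow_finrank

lemma finrank_sup_span {W : Submodule F (Fin k → F)} {t : ℕ} (ht : 1 ≤ t)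
    (hW : finrank F W = t - 1)
    {v : Fin k → F} (hv : v ∉ W) : finrank F ↥(W ⊔ Submodule.span F {v}) = t := by
  have hv0 : v ≠ 0 := fun h => hv (h ▸ W.zero_mem)
  have hd : W ⊓ Submodule.span F {v} = ⊥ := by
    rw [← disjoint_iff]
    exact Submodule.disjoint_span_singleton.2 (fun h => absurd h hv)
  have h2 := Submodule.finrank_sup_add_finrank_inf_eq W (Submodule.span F {v})
  rw [hd, hW, finrank_span_singleton hv0, finrank_bot] at h2
  omega

lemma inf_eq_W {W U V : Submodule F (Fin k → F)} {t : ℕ} (ht : 1 ≤ t)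
    (hW : finrank F W = t - 1) (hWU : W ≤ U)
    (hWV : W ≤ V) (hV : finrank F V = t) (hVU : ¬ V ≤ U) : V ⊓ U = W := by
  have hlt : V ⊓ U < V :=
    lt_of_le_of_ne inf_le_left (fun h => hVU (by rw [← h]; exact inf_le_right))
  have hr : finrank F ↥(V ⊓ U) < t := hV ▸ Submodule.finrank_lt_finrank_of_lt hlt
  exact (Submodule.eq_of_le_of_finrank_le (le_inf hWV hWU) (by omega)).symm

/-- dimension step -/
lemma finrank_sup_good {W U V : Submodule F (Fin k → F)} {t d : ℕ} (ht : 1 ≤ t)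
    (hW : finrank F W = t - 1) (hWU : W ≤ U) (hU : finrank F U = d)
    (hWV : W ≤ V) (hV : finrank F V = t) (hVU : ¬ V ≤ U) :
    finrank F ↥(U ⊔ V) = d + 1 := by
  have h2 := Submodule.finrank_sup_add_finrank_inf_eq U V
  rw [inf_comm, inf_eq_W ht hW hWU hWV hV hVU, hW, hU, hV] at h2
  omega

/-- The core counting lemma. -/
lemma step_count (W U : Submodule F (Fin k → F)) {t d : ℕ} (ht : 1 ≤ t)
    (hW : finrank F W = t - 1) (hWU : W ≤ U) (hU : finrank F U = d) :
    (Finset.univ.filter (fun V : Submodule F (Fin k → F) =>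
        finrank F V = t ∧ W ≤ V ∧ ¬ V ≤ U)).card
      * (Fintype.card F ^ t - Fintype.card F ^ (t - 1))
      = Fintype.card F ^ k - Fintype.card F ^ d := by
  classical
  set q := Fintype.card F
  set T := Finset.univ.filter (fun V : Submodule F (Fin k → F) =>
      finrank F V = t ∧ W ≤ V ∧ ¬ V ≤ U) with hT
  set A : Finset (Fin k → F) := Finset.univ.filter (fun v => v ∉ U) with hA
  have hAcard : A.card = q ^ k - q ^ d := by
    have h1 : A = (Set.toFinset (U : Set (Fin k → F)))ᶜ := by
      ext v; simp [hA, Set.mem_toFinset]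
    rw [h1, Finset.card_compl, Set.toFinset_card]
    have : Fintype.card ((U : Set (Fin k → F))) = Fintype.card U := rfl
    rw [this, card_sub, hU]
    congr 1
    rw [Fintype.card_fun, Fintype.card_fin]
  have hmap : ∀ v ∈ A, (W ⊔ Submodule.span F {v}) ∈ T := by
    intro v hv
    rw [hA, Finset.mem_filter] at hv
    have hvU : v ∉ U := hv.2
    have hvW : v ∉ W := fun h => hvU (hWU h)
    rw [hT, Finset.mem_filter]
    refine ⟨Finset.mem_univ _, finrank_sup_span ht hW hvW, le_sup_left, fun hle => hvU ?_⟩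
    exact hle (le_sup_right (α := Submodule F (Fin k → F)) (Submodule.mem_span_singleton_self v))
  rw [Finset.card_eq_sum_card_fiberwise hmap] at hAcard
  have hfib : ∀ V ∈ T, (A.filter (fun v => W ⊔ Submodule.span F {v} = V)).card
      = q ^ t - q ^ (t - 1) := by
    intro V hV
    rw [hT, Finset.mem_filter] at hV
    obtain ⟨-, hVt, hWV, hVU⟩ := hV
    have hinf : V ⊓ U = W := inf_eq_W ht hW hWU hWV hVt hVU
    have h1 : A.filter (fun v => W ⊔ Submodule.span F {v} = V)
        = Set.toFinset (V : Set (Fin k → F)) \ Set.toFinset (U : Set (Fin k → F)) := by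
      ext v
      simp only [hA, Finset.mem_filter, Finset.mem_univ, true_and, Finset.mem_sdiff,
        Set.mem_toFinset, SetLike.mem_coe]
      constructor
      · rintro ⟨hvU, rfl⟩
        exact ⟨le_sup_right (α := Submodule F (Fin k → F))
          (Submodule.mem_span_singleton_self v), hvU⟩
      · rintro ⟨hvV, hvU⟩
        refine ⟨hvU, ?_⟩
        have hvW : v ∉ W := fun h => hvU (hWU h)
        have hle : W ⊔ Submodule.span F {v} ≤ V :=
          sup_le hWV ((Submodule.span_singleton_le_iff_mem v V).2 hvV)
        exact Submodule.eq_of_le_of_finrank_eq hle (by rw [finrank_sup_span ht hW hvW, hVt])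
    rw [h1]
    have hsub := Finset.card_sdiff_add_card_inter (Set.toFinset (V : Set (Fin k → F)))
      (Set.toFinset (U : Set (Fin k → F)))
    have hVcard : (Set.toFinset (V : Set (Fin k → F))).card = q ^ t := by
      rw [Set.toFinset_card]
      have : Fintype.card ((V : Set (Fin k → F))) = Fintype.card V := rfl
      rw [this, card_sub, hVt]
    have hicard : (Set.toFinset (V : Set (Fin k → F)) ∩ Set.toFinset (U : Set (Fin k → F))).card
        = q ^ (t - 1) := by
      have h2 : Set.toFinset (V : Set (Fin k → F)) ∩ Set.toFinset (U : Set (Fin k → F))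
          = Set.toFinset (W : Set (Fin k → F)) := by
        ext v
        simp only [Finset.mem_inter, Set.mem_toFinset, SetLike.mem_coe]
        rw [← hinf]; simp [Submodule.mem_inf]
      rw [h2, Set.toFinset_card]
      have : Fintype.card ((W : Set (Fin k → F))) = Fintype.card W := rfl
      rw [this, card_sub, hW]
    omega
  rw [Finset.sum_congr rfl hfib, Finset.sum_const, smul_eq_mul] at hAcard
  exact hAcard

lemma ordered_iff {W S V₁ V₂ : Submodule F (Fin k → F)} {m t : ℕ} (ht : 1 ≤ t)
    (hW : finrank F W = t - 1) (hWS : W ≤ S) (hS : finrank F S = m + t)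
    (h1 : finrank F V₁ = t) (hW1 : W ≤ V₁) (h2 : finrank F V₂ = t) (hW2 : W ≤ V₂) :
    finrank F ↥(S ⊔ V₁ ⊔ V₂) = m + t + 2 ↔ (¬ V₁ ≤ S ∧ ¬ V₂ ≤ S ⊔ V₁) := by
  constructor
  · intro heq
    constructor
    · by_contra h1'
      rw [sup_eq_left.2 h1'] at heq
      by_cases h2' : V₂ ≤ S
      · rw [sup_eq_left.2 h2'] at heq; omega
      · rw [finrank_sup_good ht hW hWS hS hW2 h2 h2'] at heq; omega
    · intro h2'
      rw [sup_eq_left.2 h2'] at heq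
      by_cases h1' : V₁ ≤ S
      · rw [sup_eq_left.2 h1'] at heq; omega
      · rw [finrank_sup_good ht hW hWS hS hW1 h1 h1'] at heq; omega
  · rintro ⟨h1', h2'⟩
    have d1 : finrank F ↥(S ⊔ V₁) = m + t + 1 :=
      finrank_sup_good ht hW hWS hS hW1 h1 h1'
    have hWS1 : W ≤ S ⊔ V₁ := hWS.trans le_sup_left
    have := finrank_sup_good ht hW hWS1 d1 hW2 h2 h2'
    omega

/-- ordered pair count -/
lemma ordered_count {W S : Submodule F (Fin k → F)} {m t : ℕ} (ht : 1 ≤ t)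
    (hW : finrank F W = t - 1) (hWS : W ≤ S) (hS : finrank F S = m + t) :
    (Finset.univ.filter (fun p : Submodule F (Fin k → F) × Submodule F (Fin k → F) =>
        (finrank F p.1 = t ∧ W ≤ p.1) ∧ (finrank F p.2 = t ∧ W ≤ p.2) ∧
        finrank F ↥(S ⊔ p.1 ⊔ p.2) = m + t + 2)).card
      * (Fintype.card F ^ t - Fintype.card F ^ (t - 1))
      * (Fintype.card F ^ t - Fintype.card F ^ (t - 1))
      = (Fintype.card F ^ k - Fintype.card F ^ (m + t))
        * (Fintype.card F ^ k - Fintype.card F ^ (m + t + 1)) := by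
  classical
  set q := Fintype.card F
  set c := q ^ t - q ^ (t - 1) with hc
  set OP := Finset.univ.filter (fun p : Submodule F (Fin k → F) × Submodule F (Fin k → F) =>
      (finrank F p.1 = t ∧ W ≤ p.1) ∧ (finrank F p.2 = t ∧ W ≤ p.2) ∧
      finrank F ↥(S ⊔ p.1 ⊔ p.2) = m + t + 2) with hOP
  set T₁ := Finset.univ.filter (fun V : Submodule F (Fin k → F) =>
      finrank F V = t ∧ W ≤ V ∧ ¬ V ≤ S) with hT₁
  have hmap : ∀ p ∈ OP, p.1 ∈ T₁ := by
    intro p hp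
    rw [hOP, Finset.mem_filter] at hp
    obtain ⟨-, ⟨ha1, ha2⟩, ⟨hb1, hb2⟩, hd⟩ := hp
    have := (ordered_iff ht hW hWS hS ha1 ha2 hb1 hb2).1 hd
    rw [hT₁, Finset.mem_filter]
    exact ⟨Finset.mem_univ _, ha1, ha2, this.1⟩
  have hsum := Finset.card_eq_sum_card_fiberwise hmap
  have hfib : ∀ V₁ ∈ T₁, (OP.filter (fun p => p.1 = V₁)).card * c
      = q ^ k - q ^ (m + t + 1) := by
    intro V₁ hV₁
    rw [hT₁, Finset.mem_filter] at hV₁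
    obtain ⟨-, ha1, ha2, ha3⟩ := hV₁
    set T₂ := Finset.univ.filter (fun V : Submodule F (Fin k → F) =>
        finrank F V = t ∧ W ≤ V ∧ ¬ V ≤ S ⊔ V₁) with hT₂
    have hbij : (OP.filter (fun p => p.1 = V₁)).card = T₂.card := by
      refine Finset.card_bij' (fun p _ => p.2) (fun V₂ _ => (V₁, V₂)) ?_ ?_ ?_ ?_
      · intro p hp
        rw [Finset.mem_filter, hOP, Finset.mem_filter] at hp
        obtain ⟨⟨-, ⟨hb1, hb2⟩, ⟨hc1, hc2⟩, hd⟩, hp1⟩ := hp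
        have := (ordered_iff ht hW hWS hS hb1 hb2 hc1 hc2).1 hd
        rw [hT₂, Finset.mem_filter]
        rw [hp1] at this
        exact ⟨Finset.mem_univ _, hc1, hc2, this.2⟩
      · intro V₂ hV₂
        rw [hT₂, Finset.mem_filter] at hV₂
        obtain ⟨-, hb1, hb2, hb3⟩ := hV₂
        rw [Finset.mem_filter, hOP, Finset.mem_filter]
        refine ⟨⟨Finset.mem_univ _, ⟨ha1, ha2⟩, ⟨hb1, hb2⟩, ?_⟩, rfl⟩
        exact (ordered_iff ht hW hWS hS ha1 ha2 hb1 hb2).2 ⟨ha3, hb3⟩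
      · rintro ⟨p1, p2⟩ hp
        rw [Finset.mem_filter] at hp
        show (V₁, p2) = (p1, p2)
        exact congrArg (fun x => (x, p2)) hp.2.symm
      · intro V₂ _; rfl
    rw [hbij]
    have hWS1 : W ≤ S ⊔ V₁ := hWS.trans le_sup_left
    have d1 : finrank F ↥(S ⊔ V₁) = m + t + 1 :=
      finrank_sup_good ht hW hWS hS ha2 ha1 ha3
    exact step_count W (S ⊔ V₁) ht hW hWS1 d1
  have hT₁c : T₁.card * c = q ^ k - q ^ (m + t) := step_count W S ht hW hWS hS
  calc OP.card * c * c = (∑ V₁ ∈ T₁, (OP.filter (fun p => p.1 = V₁)).card) * c * c := by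
        rw [← hsum]
    _ = (∑ V₁ ∈ T₁, (OP.filter (fun p => p.1 = V₁)).card * c) * c := by
        rw [Finset.sum_mul]
    _ = (∑ V₁ ∈ T₁, (q ^ k - q ^ (m + t + 1))) * c := by
        rw [Finset.sum_congr rfl hfib]
    _ = T₁.card * (q ^ k - q ^ (m + t + 1)) * c := by
        rw [Finset.sum_const, smul_eq_mul]
    _ = T₁.card * c * (q ^ k - q ^ (m + t + 1)) := by ring
    _ = (q ^ k - q ^ (m + t)) * (q ^ k - q ^ (m + t + 1)) := by rw [hT₁c]

lemma unordered_count {W S : Submodule F (Fin k → F)} {m t : ℕ} (ht : 1 ≤ t)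
    (hW : finrank F W = t - 1) (hWS : W ≤ S) (hS : finrank F S = m + t) :
    (Finset.univ.filter (fun p : Submodule F (Fin k → F) × Submodule F (Fin k → F) =>
        (finrank F p.1 = t ∧ W ≤ p.1) ∧ (finrank F p.2 = t ∧ W ≤ p.2) ∧
        finrank F ↥(S ⊔ p.1 ⊔ p.2) = m + t + 2)).card
      = 2 * (Finset.univ.filter (fun s : Finset (Submodule F (Fin k → F)) =>
        s.card = 2 ∧ (∀ V ∈ s, finrank F V = t ∧ W ≤ V) ∧
        finrank F ↥(S ⊔ s.sup id) = m + t + 2)).card := by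
  classical
  set OP := Finset.univ.filter (fun p : Submodule F (Fin k → F) × Submodule F (Fin k → F) =>
      (finrank F p.1 = t ∧ W ≤ p.1) ∧ (finrank F p.2 = t ∧ W ≤ p.2) ∧
      finrank F ↥(S ⊔ p.1 ⊔ p.2) = m + t + 2) with hOP
  set T' := Finset.univ.filter (fun s : Finset (Submodule F (Fin k → F)) =>
      s.card = 2 ∧ (∀ V ∈ s, finrank F V = t ∧ W ≤ V) ∧
      finrank F ↥(S ⊔ s.sup id) = m + t + 2) with hT'
  have hne : ∀ p ∈ OP, p.1 ≠ p.2 := by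
    intro p hp
    rw [hOP, Finset.mem_filter] at hp
    obtain ⟨-, ⟨ha1, ha2⟩, ⟨hb1, hb2⟩, hd⟩ := hp
    have h := (ordered_iff ht hW hWS hS ha1 ha2 hb1 hb2).1 hd
    intro he
    exact h.2 (he ▸ le_sup_right)
  have hsup : ∀ a b : Submodule F (Fin k → F),
      ({a, b} : Finset (Submodule F (Fin k → F))).sup id = a ⊔ b := by
    intro a b
    simp [Finset.sup_insert, Finset.sup_singleton]
  have hmap : ∀ p ∈ OP, ({p.1, p.2} : Finset (Submodule F (Fin k → F))) ∈ T' := by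
    intro p hp
    have hne' := hne p hp
    rw [hOP, Finset.mem_filter] at hp
    obtain ⟨-, ⟨ha1, ha2⟩, ⟨hb1, hb2⟩, hd⟩ := hp
    rw [hT', Finset.mem_filter]
    refine ⟨Finset.mem_univ _, Finset.card_pair hne', ?_, ?_⟩
    · intro V hV
      rcases Finset.mem_insert.1 hV with h | h
      · exact h ▸ ⟨ha1, ha2⟩
      · rw [Finset.mem_singleton] at h; exact h ▸ ⟨hb1, hb2⟩
    · rw [hsup, ← sup_assoc]; exact hd
  rw [Finset.card_eq_sum_card_fiberwise hmap]
  have hfib : ∀ s ∈ T',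
      (OP.filter (fun p => ({p.1, p.2} : Finset (Submodule F (Fin k → F))) = s)).card = 2 := by
    intro s hs
    rw [hT', Finset.mem_filter] at hs
    obtain ⟨-, hcard, hdims, hd⟩ := hs
    obtain ⟨a, b, hab, rfl⟩ := Finset.card_eq_two.1 hcard
    obtain ⟨ha1, ha2⟩ := hdims a (Finset.mem_insert_self _ _)
    obtain ⟨hb1, hb2⟩ := hdims b (Finset.mem_insert.2 (Or.inr (Finset.mem_singleton_self _)))
    rw [hsup, ← sup_assoc] at hd
    have hfilter : OP.filter (fun p => ({p.1, p.2} : Finset (Submodule F (Fin k → F))) = {a, b})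
        = ({(a, b), (b, a)} : Finset (Submodule F (Fin k → F) × Submodule F (Fin k → F))) := by
      ext p
      simp only [Finset.mem_filter, Finset.mem_insert, Finset.mem_singleton]
      constructor
      · rintro ⟨hpOP, hps⟩
        have hne' := hne p hpOP
        have h1 : p.1 ∈ ({a, b} : Finset (Submodule F (Fin k → F))) := by
          rw [← hps]; exact Finset.mem_insert_self _ _
        have h2 : p.2 ∈ ({a, b} : Finset (Submodule F (Fin k → F))) := by
          rw [← hps]; exact Finset.mem_insert.2 (Or.inr (Finset.mem_singleton_self _))
        rw [Finset.mem_insert, Finset.mem_singleton] at h1 h2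
        rcases h1 with h1 | h1 <;> rcases h2 with h2 | h2
        · exact absurd (h1.trans h2.symm) hne'
        · exact Or.inl (Prod.ext h1 h2)
        · exact Or.inr (Prod.ext h1 h2)
        · exact absurd (h1.trans h2.symm) hne'
      · intro hp
        have hOPab : (a, b) ∈ OP := by
          rw [hOP, Finset.mem_filter]
          exact ⟨Finset.mem_univ _, ⟨ha1, ha2⟩, ⟨hb1, hb2⟩, hd⟩
        have hOPba : (b, a) ∈ OP := by
          rw [hOP, Finset.mem_filter]
          refine ⟨Finset.mem_univ _, ⟨hb1, hb2⟩, ⟨ha1, ha2⟩, ?_⟩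
          rw [sup_right_comm]; exact hd
        rcases hp with rfl | rfl
        · exact ⟨hOPab, rfl⟩
        · exact ⟨hOPba, Finset.pair_comm b a⟩
    rw [hfilter]
    refine Finset.card_pair ?_
    intro h
    exact hab (congrArg Prod.fst h)
  rw [Finset.sum_congr rfl hfib, Finset.sum_const, smul_eq_mul, mul_comm]

/-- Let `W` be a `(t-1)`-dimensional subspace of `𝔽_q^k` and `S` a fixed
`(m+t)`-dimensional subspace containing `W`, with `m + t + 2 ≤ k`. The number of
unordered pairs `{V₁, V₂}` of `t`-dimensional subspaces containing `W` such that
`S + V₁ + V₂` has dimension `m + t + 2` equals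
`(q^(2m+3)/2) [k-m-t choose 1]_q [k-m-t-1 choose 1]_q`. -/
theorem stmt_8 (q k m t : ℕ) (hq : IsPrimePow q) (hm : 1 ≤ m) (ht : 1 ≤ t)
    (hk : m + t + 2 ≤ k)
    (F : Type) [Field F] [Fintype F] (hF : Fintype.card F = q)
    (W : Submodule F (Fin k → F)) (hW : Module.finrank F W = t - 1)
    (S : Submodule F (Fin k → F)) (hWS : W ≤ S) (hS : Module.finrank F S = m + t) :
    Nat.card {s : Finset (Submodule F (Fin k → F)) //
        s.card = 2 ∧ (∀ V ∈ s, Module.finrank F V = t ∧ W ≤ V) ∧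
        Module.finrank F ↥(S ⊔ s.sup id) = m + t + 2} =
      q ^ (2 * m + 3) * (gbinom q (k - m - t) 1 * gbinom q (k - m - t - 1) 1) / 2 := by
  classical
  have hq2 : 2 ≤ q := by rw [← hF]; exact Fintype.one_lt_card
  set a := k - m - t with ha
  have hka : k = m + t + a := by omega
  have ha2 : 2 ≤ a := by omega
  have hOC := ordered_count (W := W) (S := S) ht hW hWS hS
  have hUC := unordered_count (W := W) (S := S) ht hW hWS hS
  rw [hF] at hOC
  set N := (Finset.univ.filter (fun s : Finset (Submodule F (Fin k → F)) =>
      s.card = 2 ∧ (∀ V ∈ s, finrank F V = t ∧ W ≤ V) ∧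
      finrank F ↥(S ⊔ s.sup id) = m + t + 2)).card with hN
  have hNat : Nat.card {s : Finset (Submodule F (Fin k → F)) //
      s.card = 2 ∧ (∀ V ∈ s, Module.finrank F V = t ∧ W ≤ V) ∧
      Module.finrank F ↥(S ⊔ s.sup id) = m + t + 2} = N := by
    rw [Nat.card_eq_fintype_card, Fintype.card_subtype]
  have E : 2 * N * (q ^ t - q ^ (t - 1)) * (q ^ t - q ^ (t - 1))
      = (q ^ k - q ^ (m + t)) * (q ^ k - q ^ (m + t + 1)) := by
    rw [← hUC]; exact hOC
  have ht1 : t - 1 + 1 = t := by omega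
  have hc : q ^ t - q ^ (t - 1) = q ^ (t - 1) * (q - 1) := by
    rw [Nat.mul_sub, mul_one, ← pow_succ, ht1]
  have hA : q ^ k - q ^ (m + t) = q ^ (m + t) * (q ^ a - 1) := by
    have hk' : k = (m + t) + a := by omega
    rw [hk', pow_add, Nat.mul_sub, mul_one]
  have hB : q ^ k - q ^ (m + t + 1) = q ^ (m + t + 1) * (q ^ (a - 1) - 1) := by
    have hk' : k = (m + t + 1) + (a - 1) := by omega
    rw [hk', pow_add, Nat.mul_sub, mul_one]
  have hdvd : ∀ n : ℕ, (q - 1) ∣ (q ^ n - 1) := fun n => by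
    simpa using Nat.sub_dvd_pow_sub_pow q 1 n
  have hg : ∀ n : ℕ, gbinom q n 1 = (q ^ n - 1) / (q - 1) := by
    intro n; simp [gbinom]
  have hu : (q - 1) * gbinom q a 1 = q ^ a - 1 := by
    rw [hg]; exact Nat.mul_div_cancel' (hdvd a)
  have hv : (q - 1) * gbinom q (a - 1) 1 = q ^ (a - 1) - 1 := by
    rw [hg]; exact Nat.mul_div_cancel' (hdvd (a - 1))
  rw [hc, hA, hB, ← hu, ← hv] at E
  have hexp : q ^ (m + t) * ((q - 1) * gbinom q a 1)
      * (q ^ (m + t + 1) * ((q - 1) * gbinom q (a - 1) 1))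
      = (q ^ (2 * m + 3) * (gbinom q a 1 * gbinom q (a - 1) 1))
        * ((q ^ (t - 1) * (q - 1)) * (q ^ (t - 1) * (q - 1))) := by
    have e1 : m + t = (t - 1) + (m + 1) := by omega
    have e2 : m + t + 1 = (t - 1) + (m + 2) := by omega
    have e3 : 2 * m + 3 = (m + 1) + (m + 2) := by omega
    rw [e2, e1, e3, pow_add, pow_add, pow_add]
    ring
  rw [hexp, mul_assoc] at E
  have hpos : 0 < (q ^ (t - 1) * (q - 1)) * (q ^ (t - 1) * (q - 1)) := by
    have h1 : 0 < q := by omega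
    have h2 : 0 < q - 1 := by omega
    positivity
  have E2 : 2 * N = q ^ (2 * m + 3) * (gbinom q a 1 * gbinom q (a - 1) 1) :=
    Nat.eq_of_mul_eq_mul_right hpos E
  rw [hNat]
  omega
end

section
/- In the caching line graph $\mathcal{L}$ from the projective-geometry construction, for any $(m+3)$-element set $Z = \{V_1, \dots, V_{m+3}\}$ of $t$-dimensional subspaces (each containing $W$) with $\dim(\sum_{i=1}^{m+3} V_i) = m+t+2$, the set $C_Z = \{(\{V_i, V_j\},\, Z \setminus \{V_i, V_j\}) : V_i, V_j \in Z,\ i \ne j\}$ is a clique of size $\binom{m+3}{2}$ in the graph $\overline{\mathcal{L}^2}$. -/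
/-!
For two distinct pairs `X₁ ≠ X₂` in `Z`, some `v ∈ X₂ \ X₁` is missing from `X₁ ∪ (Z \ X₂)`, so
that family consists of at most `m + 2` spaces, each a one-dimensional extension of `W`; its sum
therefore has dimension at most `(t - 1) + (m + 2) < m + t + 2`, and neither `(X₁, Z \ X₂)` nor
`(X₂, Z \ X₁)` is a vertex of `L`. Since `X ↦ Z \ X` is injective on subsets of `Z`, the two
members of `C_Z` also differ in both coordinates, and then no path of length at most two can
join them in `L`.
-/

/-- The square of a graph: vertices are adjacent iff they are distinct and joined by a
path of length at most 2 in `G`. -/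
def sqGraph {α : Type*} (G : SimpleGraph α) : SimpleGraph α where
  Adj u v := u ≠ v ∧ (G.Adj u v ∨ ∃ w, G.Adj u w ∧ G.Adj w v)
  symm := by
    constructor
    intro a b h
    refine ⟨h.1.symm, ?_⟩
    rcases h.2 with h' | ⟨w, h1, h2⟩
    · exact Or.inl h'.symm
    · exact Or.inr ⟨w, h2.symm, h1.symm⟩
  loopless := by constructor; intro a h; exact h.1 rfl

section LineGraph

variable {α β : Type*} {isVert : α × β → Prop} {L : SimpleGraph (α × β)}

theorem not_sqGraph_adj_of_not_isVert
    (hL : ∀ u v, L.Adj u v ↔ u ≠ v ∧ isVert u ∧ isVert v ∧ (u.1 = v.1 ∨ u.2 = v.2))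
    {u v : α × β} (h₁ : u.1 ≠ v.1) (h₂ : u.2 ≠ v.2)
    (huv : ¬ isVert (u.1, v.2)) (hvu : ¬ isVert (v.1, u.2)) :
    ¬ (sqGraph L).Adj u v := by
  rintro ⟨-, hadj | ⟨w, huw, hwv⟩⟩
  · rcases ((hL u v).1 hadj).2.2.2 with h | h
    · exact h₁ h
    · exact h₂ h
  · obtain ⟨-, -, hw, hu⟩ := (hL u w).1 huw
    obtain ⟨-, -, -, hv⟩ := (hL w v).1 hwv
    rcases hu with hu | hu <;> rcases hv with hv | hv
    · exact h₁ (hu.trans hv)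
    · exact huv (by rw [hu, ← hv]; exact hw)
    · exact hvu (by rw [← hv, hu]; exact hw)
    · exact h₂ (hu.trans hv)

end LineGraph

section Dimension

variable {K M : Type*} [DivisionRing K] [AddCommGroup M] [Module K M] [FiniteDimensional K M]

theorem Submodule.finrank_sup_le_succ {W V U : Submodule K M} (hWV : W ≤ V) (hWU : W ≤ U)
    (hV : Module.finrank K V ≤ Module.finrank K W + 1) :
    Module.finrank K ↥(V ⊔ U) ≤ Module.finrank K U + 1 := by
  have hmod := Submodule.finrank_sup_add_finrank_inf_eq V U
  have hinf : Module.finrank K W ≤ Module.finrank K ↥(V ⊓ U) :=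
    Submodule.finrank_mono (le_inf hWV hWU)
  omega

theorem Submodule.finrank_sup_finset_sup_le (W : Submodule K M) (S : Finset (Submodule K M))
    (hS : ∀ V ∈ S, W ≤ V ∧ Module.finrank K V ≤ Module.finrank K W + 1) :
    Module.finrank K ↥(W ⊔ S.sup id) ≤ Module.finrank K W + S.card := by
  classical
  induction S using Finset.induction_on with
  | empty => rw [Finset.sup_empty, sup_bot_eq, Finset.card_empty, add_zero]
  | @insert V S hVS ih =>
    obtain ⟨hWV, hV⟩ := hS V (Finset.mem_insert_self V S)
    have hstep := Submodule.finrank_sup_le_succ hWV le_sup_left hV (U := W ⊔ S.sup id)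
    have hS' := ih fun V' hV' => hS V' (Finset.mem_insert_of_mem hV')
    rw [Finset.sup_insert, id, sup_left_comm, Finset.card_insert_of_notMem hVS]
    omega

theorem Submodule.finrank_finset_sup_le (W : Submodule K M) (S : Finset (Submodule K M))
    (hS : ∀ V ∈ S, W ≤ V ∧ Module.finrank K V ≤ Module.finrank K W + 1) :
    Module.finrank K ↥(S.sup id) ≤ Module.finrank K W + S.card :=
  (Submodule.finrank_mono le_sup_right).trans (Submodule.finrank_sup_finset_sup_le W S hS)

end Dimension

theorem Finset.card_union_sdiff_lt {α : Type*} [DecidableEq α] {Z X₁ X₂ : Finset α}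
    (h₁ : X₁ ⊆ Z) (h₂ : X₂ ⊆ Z) (hcard : X₁.card ≤ X₂.card) (hne : X₁ ≠ X₂) :
    (X₁ ∪ (Z \ X₂)).card < Z.card := by
  obtain ⟨v, hv₂, hv₁⟩ := Finset.not_subset.1 fun h => hne (Finset.eq_of_subset_of_card_le h hcard).symm
  have hsub : X₁ ∪ (Z \ X₂) ⊆ Z.erase v := by
    intro x hx
    rcases Finset.mem_union.1 hx with hx | hx
    · exact Finset.mem_erase.2 ⟨fun h => hv₁ (h ▸ hx), h₁ hx⟩
    · exact Finset.mem_erase.2 ⟨fun h => (Finset.mem_sdiff.1 hx).2 (h ▸ hv₂), Finset.sdiff_subset hx⟩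
  exact (Finset.card_le_card hsub).trans_lt (Finset.card_erase_lt_of_mem (h₂ hv₂))

theorem Finset.sdiff_injOn_powerset {α : Type*} [DecidableEq α] (Z : Finset α) :
    Set.InjOn (Z \ ·) {X | X ⊆ Z} := fun X₁ h₁ X₂ h₂ h => by
  rw [← Finset.sdiff_sdiff_eq_self h₁, ← Finset.sdiff_sdiff_eq_self h₂]
  exact congrArg (Z \ ·) h

theorem stmt_13_general (k m t : ℕ) (ht : 1 ≤ t)
    (F : Type) [Field F]
    [DecidableEq (Submodule F (Fin k → F))]
    (W : Submodule F (Fin k → F)) (hW : Module.finrank F W = t - 1)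
    (isVert : Finset (Submodule F (Fin k → F)) × Finset (Submodule F (Fin k → F)) → Prop)
    (hisVert : ∀ p, isVert p ↔
      p.1.card = 2 ∧ p.2.card = m + 1 ∧
      (∀ V ∈ p.1 ∪ p.2, Module.finrank F V = t ∧ W ≤ V) ∧
      Module.finrank F ↥(p.1.sup id) = t + 1 ∧
      Module.finrank F ↥(p.2.sup id) = m + t ∧
      Module.finrank F ↥((p.1 ∪ p.2).sup id) = m + t + 2)
    (L : SimpleGraph (Finset (Submodule F (Fin k → F)) × Finset (Submodule F (Fin k → F))))
    (hL : ∀ u v, L.Adj u v ↔ u ≠ v ∧ isVert u ∧ isVert v ∧ (u.1 = v.1 ∨ u.2 = v.2))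
    (Z : Finset (Submodule F (Fin k → F)))
    (hZcard : Z.card = m + 3)
    (hZel : ∀ V ∈ Z, Module.finrank F V = t ∧ W ≤ V) :
    (sqGraph L)ᶜ.IsClique {p | ∃ X ⊆ Z, X.card = 2 ∧ p = (X, Z \ X)} ∧
    Set.ncard {p : Finset (Submodule F (Fin k → F)) × Finset (Submodule F (Fin k → F)) |
        ∃ X ⊆ Z, X.card = 2 ∧ p = (X, Z \ X)} = Nat.choose (m + 3) 2 := by
  have hnotVert : ∀ X₁ ⊆ Z, ∀ X₂ ⊆ Z, X₁.card = 2 → X₂.card = 2 → X₁ ≠ X₂ →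
      ¬ isVert (X₁, Z \ X₂) := fun X₁ h₁ X₂ h₂ c₁ c₂ hne hv => by
    have hlt := Finset.card_union_sdiff_lt h₁ h₂ (c₁.trans c₂.symm).le hne
    have hle := Submodule.finrank_finset_sup_le W (X₁ ∪ (Z \ X₂)) fun V hV =>
      have hVZ := hZel V (Finset.union_subset h₁ Finset.sdiff_subset hV)
      ⟨hVZ.2, by omega⟩
    have hdim : Module.finrank F ↥((X₁ ∪ (Z \ X₂)).sup id) = m + t + 2 :=
      ((hisVert _).1 hv).2.2.2.2.2
    omega
  have hset : {p | ∃ X ⊆ Z, X.card = 2 ∧ p = (X, Z \ X)} =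
      (fun X => (X, Z \ X)) '' ↑(Z.powersetCard 2) := by
    ext p
    simp [Finset.mem_powersetCard, and_assoc, eq_comm]
  refine ⟨?_, ?_⟩
  · rintro _ ⟨X₁, h₁, c₁, rfl⟩ _ ⟨X₂, h₂, c₂, rfl⟩ hne
    have hX : X₁ ≠ X₂ := fun h => hne (by rw [h])
    exact ⟨hne, not_sqGraph_adj_of_not_isVert hL hX
      (fun h => hX (Z.sdiff_injOn_powerset h₁ h₂ h))
      (hnotVert X₁ h₁ X₂ h₂ c₁ c₂ hX) (hnotVert X₂ h₂ X₁ h₁ c₂ c₁ hX.symm)⟩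
  · rw [hset, Set.ncard_image_of_injective _ fun X₁ X₂ h => (Prod.ext_iff.1 h).1,
      Set.ncard_coe_finset, Finset.card_powersetCard, hZcard]

/-- In the projective-geometry caching line graph `L`, for any
`(m+3)`-set `Z` of `t`-dimensional subspaces containing `W` whose sum has dimension
`m+t+2`, the set `C_Z = {({Vᵢ,Vⱼ}, Z∖{Vᵢ,Vⱼ})}` is a clique of size `C(m+3,2)` in the
complement of the square of `L`. -/
theorem stmt_13 (q k m t : ℕ) (hq : IsPrimePow q) (hm : 1 ≤ m) (ht : 1 ≤ t)
    (hk : m + t + 2 ≤ k)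
    (F : Type) [Field F] [Fintype F] (hF : Fintype.card F = q)
    [DecidableEq (Submodule F (Fin k → F))]
    (W : Submodule F (Fin k → F)) (hW : Module.finrank F W = t - 1)
    (isVert : Finset (Submodule F (Fin k → F)) × Finset (Submodule F (Fin k → F)) → Prop)
    (hisVert : ∀ p, isVert p ↔
      p.1.card = 2 ∧ p.2.card = m + 1 ∧
      (∀ V ∈ p.1 ∪ p.2, Module.finrank F V = t ∧ W ≤ V) ∧
      Module.finrank F ↥(p.1.sup id) = t + 1 ∧
      Module.finrank F ↥(p.2.sup id) = m + t ∧
      Module.finrank F ↥((p.1 ∪ p.2).sup id) = m + t + 2)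
    (L : SimpleGraph (Finset (Submodule F (Fin k → F)) × Finset (Submodule F (Fin k → F))))
    (hL : ∀ u v, L.Adj u v ↔ u ≠ v ∧ isVert u ∧ isVert v ∧ (u.1 = v.1 ∨ u.2 = v.2))
    (Z : Finset (Submodule F (Fin k → F)))
    (hZcard : Z.card = m + 3)
    (hZel : ∀ V ∈ Z, Module.finrank F V = t ∧ W ≤ V)
    (hZdim : Module.finrank F ↥(Z.sup id) = m + t + 2) :
    (sqGraph L)ᶜ.IsClique {p | ∃ X ⊆ Z, X.card = 2 ∧ p = (X, Z \ X)} ∧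
    Set.ncard {p : Finset (Submodule F (Fin k → F)) × Finset (Submodule F (Fin k → F)) |
        ∃ X ⊆ Z, X.card = 2 ∧ p = (X, Z \ X)} = Nat.choose (m + 3) 2 :=
  stmt_13_general k m t ht F W hW isVert hisVert L hL Z hZcard hZel
end

section
/- If $\mathcal{L}$ is a $(c,d)$-caching line graph with $d \ge 2$ whose vertex set is partitioned into $K$ user cliques of size $D$ each and into subfile cliques of size $c$ each, and whose graph $\overline{\mathcal{L}^2}$ admits a clique cover by disjoint $d$-sized cliques, then there exists a regular $d$-$(K, F, Z, S)$ placement delivery array with $F = \frac{KD}{c}$, $Z = F - D$, and $S = \frac{KD}{d}$. -/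
/-- If `L` is a `(c,d)`-caching line graph with `d ≥ 2`, whose vertex set
(a subset of `𝒦 × 𝒻` with `|𝒦| = K`) is partitioned into user cliques of size `D` and
subfile cliques of size `c`, and whose graph `complement(L²)` admits a clique cover by
disjoint `d`-sized cliques (indexed by `Fin S` with `S = KD/d`, where cliques are
characterized by the edge condition of `complement(L²)`), then there exists a regular
`d`-`(K, F, Z, S)` placement delivery array with `F = KD/c` and `Z = F - D`. -/
theorem stmt_15 (K Fn c d D S : ℕ) (hd : 2 ≤ d) (hc : 1 ≤ c)
    (𝒦 𝒻 : Type) [Fintype 𝒦] [Fintype 𝒻] [DecidableEq 𝒦] [DecidableEq 𝒻]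
    (hK : Fintype.card 𝒦 = K) (hF : Fintype.card 𝒻 = Fn)
    (Vset : Finset (𝒦 × 𝒻))
    (hUser : ∀ u : 𝒦, (Vset.filter (fun p => p.1 = u)).card = D)
    (hSub : ∀ f : 𝒻, (Vset.filter (fun p => p.2 = f)).card = c)
    (hS : S = K * D / d)
    (cc : 𝒦 × 𝒻 → Option (Fin S))
    (hccdom : ∀ p, (cc p).isSome ↔ p ∈ Vset)
    (hccsize : ∀ s : Fin S, (Vset.filter (fun p => cc p = some s)).card = d)
    (hccclique : ∀ p p', p ∈ Vset → p' ∈ Vset → p ≠ p' → cc p = cc p' →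
      p.1 ≠ p'.1 ∧ p.2 ≠ p'.2 ∧ (p.1, p'.2) ∉ Vset ∧ (p'.1, p.2) ∉ Vset) :
    Fn = K * D / c ∧
    ∃ A : 𝒻 → 𝒦 → Option (Fin S),
      -- C1: each column has exactly `Z = F - D` stars
      (∀ u : 𝒦, (Finset.univ.filter (fun f : 𝒻 => A f u = none)).card = Fn - D) ∧
      -- C2: each integer appears at least once
      (∀ s : Fin S, ∃ f u, A f u = some s) ∧
      -- C3: the PDA condition
      (∀ f1 u1 f2 u2 (s : Fin S), A f1 u1 = some s → A f2 u2 = some s →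
        (f1, u1) ≠ (f2, u2) →
        f1 ≠ f2 ∧ u1 ≠ u2 ∧ A f1 u2 = none ∧ A f2 u1 = none) ∧
      -- regularity: each integer appears exactly `d` times
      (∀ s : Fin S,
        (Finset.univ.filter (fun p : 𝒻 × 𝒦 => A p.1 p.2 = some s)).card = d) := by
  classical
  have hnone : ∀ p : 𝒦 × 𝒻, cc p = none ↔ p ∉ Vset := by
    intro p
    rw [← hccdom p, ← Option.not_isSome_iff_eq_none]
  have hVK : Vset.card = K * D := by
    rw [Finset.card_eq_sum_card_fiberwise
      (f := Prod.fst) (t := (Finset.univ : Finset 𝒦)) (fun x _ => Finset.mem_univ _)]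
    simp [hUser, hK]
  have hVF : Vset.card = Fn * c := by
    rw [Finset.card_eq_sum_card_fiberwise
      (f := Prod.snd) (t := (Finset.univ : Finset 𝒻)) (fun x _ => Finset.mem_univ _)]
    simp [hSub, hF]
  have hfibD : ∀ u : 𝒦, (Finset.univ.filter (fun f : 𝒻 => (u, f) ∈ Vset)).card = D := by
    intro u
    rw [← hUser u]
    apply Finset.card_bij (fun f _ => (u, f))
    · intro f hf
      simp only [Finset.mem_filter, Finset.mem_univ, true_and] at hf ⊢
      exact ⟨hf, trivial⟩
    · intro a _ b _ h
      exact congrArg Prod.snd h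
    · intro p hp
      simp only [Finset.mem_filter, Finset.mem_univ, true_and] at hp
      exact ⟨p.2, by simpa [← hp.2] using hp.1, by rw [← hp.2]⟩
  refine ⟨by rw [← hVK, hVF, Nat.mul_div_cancel _ hc], fun f u => cc (u, f), ?_, ?_, ?_, ?_⟩
  · intro u
    have : (Finset.univ.filter (fun f : 𝒻 => cc (u, f) = none)) =
        Finset.univ \ (Finset.univ.filter (fun f => (u, f) ∈ Vset)) := by
      ext f; simp [hnone]
    rw [this, Finset.card_sdiff_of_subset (Finset.filter_subset _ _), hfibD, Finset.card_univ, hF]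
  · intro s
    have h := hccsize s
    have hpos : 0 < (Vset.filter (fun p => cc p = some s)).card := by omega
    obtain ⟨p, hp⟩ := Finset.card_pos.mp hpos
    simp only [Finset.mem_filter] at hp
    exact ⟨p.2, p.1, hp.2⟩
  · intro f1 u1 f2 u2 s h1 h2 hne
    have m1 : (u1, f1) ∈ Vset := (hccdom _).1 (by simp [h1])
    have m2 : (u2, f2) ∈ Vset := (hccdom _).1 (by simp [h2])
    have hne' : (u1, f1) ≠ (u2, f2) := by
      intro h
      exact hne (by rw [Prod.ext_iff] at h ⊢; exact ⟨h.2, h.1⟩)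
    obtain ⟨hu, hf, hn1, hn2⟩ := hccclique _ _ m1 m2 hne' (h1.trans h2.symm)
    exact ⟨hf, hu, (hnone _).2 hn2, (hnone _).2 hn1⟩
  · intro s
    rw [← hccsize s]
    apply Finset.card_bij (fun p _ => (p.2, p.1))
    · intro p hp
      simp only [Finset.mem_filter, Finset.mem_univ, true_and] at hp ⊢
      exact ⟨(hccdom _).1 (by simp [hp]), hp⟩
    · intro a _ b _ h
      exact Prod.ext (congrArg Prod.snd h) (congrArg Prod.fst h)
    · intro p hp
      simp only [Finset.mem_filter] at hp
      exact ⟨(p.2, p.1), by simpa using hp.2, rfl⟩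
end

section
/- Let $\mathcal{L}$ be a caching line graph with vertex set $V(\mathcal{L}) \subseteq \mathcal{K} \times \mathcal{F}$ and edges exactly between distinct vertices sharing the first coordinate or the second coordinate (but not both). Then $\{(k_1,f_1),(k_2,f_2)\}$ is an edge of $\overline{\mathcal{L}^2}$ if and only if $k_1 \ne k_2$, $f_1 \ne f_2$, $(k_1,f_2) \notin V(\mathcal{L})$, and $(k_2,f_1) \notin V(\mathcal{L})$. -/
/-!
Two vertices of the caching line graph `L` are joined by a path of length two exactly when one
of the "corners" `(k₁, f₂)`, `(k₂, f₁)` of the rectangle they span is a vertex: a path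
`u - w - v` changes one coordinate per step, so either it changes the same coordinate twice
(then `u` and `v` already share the other one) or `w` is a corner.
-/

theorem sqGraph_adj_of_eq_or_adj {α : Type*} {G : SimpleGraph α} {u w v : α} (huv : u ≠ v)
    (huw : u = w ∨ G.Adj u w) (hwv : w = v ∨ G.Adj w v) : (sqGraph G).Adj u v := by
  refine ⟨huv, ?_⟩
  rcases huw with rfl | huw
  · rcases hwv with rfl | hwv
    exacts [absurd rfl huv, Or.inl hwv]
  · rcases hwv with rfl | hwv
    exacts [Or.inl huw, Or.inr ⟨w, huw, hwv⟩]

theorem Prod.fst_eq_or_snd_eq_or_eq_corner {K F : Type*} {u w v : K × F}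
    (huw : u.1 = w.1 ∨ u.2 = w.2) (hwv : w.1 = v.1 ∨ w.2 = v.2) :
    u.1 = v.1 ∨ u.2 = v.2 ∨ w = (u.1, v.2) ∨ w = (v.1, u.2) := by
  obtain ⟨a, b⟩ := w
  rcases huw with h | h <;> rcases hwv with h' | h' <;> simp_all

section CachingLineGraph

variable {K F : Type*} {V : Set (K × F)} {L : SimpleGraph (K × F)}
  (hL : ∀ u v, L.Adj u v ↔ u ≠ v ∧ u ∈ V ∧ v ∈ V ∧ (u.1 = v.1 ∨ u.2 = v.2))
include hL

theorem eq_or_adj_of_share {u v : K × F} (hu : u ∈ V) (hv : v ∈ V)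
    (h : u.1 = v.1 ∨ u.2 = v.2) : u = v ∨ L.Adj u v := by
  by_cases huv : u = v
  · exact Or.inl huv
  · exact Or.inr ((hL u v).2 ⟨huv, hu, hv, h⟩)

theorem sqGraph_adj_iff_of_lineGraph {u v : K × F} (hu : u ∈ V) (hv : v ∈ V) (huv : u ≠ v) :
    (sqGraph L).Adj u v ↔ u.1 = v.1 ∨ u.2 = v.2 ∨ (u.1, v.2) ∈ V ∨ (v.1, u.2) ∈ V := by
  constructor
  · rintro ⟨-, h | ⟨w, huw, hwv⟩⟩
    · exact ((hL u v).1 h).2.2.2.elim Or.inl (Or.inr ∘ Or.inl)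
    obtain ⟨-, -, hw, huw⟩ := (hL u w).1 huw
    obtain ⟨-, -, -, hwv⟩ := (hL w v).1 hwv
    rcases Prod.fst_eq_or_snd_eq_or_eq_corner huw hwv with h | h | rfl | rfl
    exacts [Or.inl h, Or.inr (Or.inl h), Or.inr (Or.inr (Or.inl hw)),
      Or.inr (Or.inr (Or.inr hw))]
  · have share_self := eq_or_adj_of_share hL hv hv (Or.inl rfl)
    rintro (h | h | h | h)
    · exact sqGraph_adj_of_eq_or_adj huv (eq_or_adj_of_share hL hu hv (Or.inl h)) share_self
    · exact sqGraph_adj_of_eq_or_adj huv (eq_or_adj_of_share hL hu hv (Or.inr h)) share_self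
    · exact sqGraph_adj_of_eq_or_adj huv (eq_or_adj_of_share hL hu h (Or.inl rfl))
        (eq_or_adj_of_share hL h hv (Or.inr rfl))
    · exact sqGraph_adj_of_eq_or_adj huv (eq_or_adj_of_share hL hu h (Or.inr rfl))
        (eq_or_adj_of_share hL h hv (Or.inl rfl))

end CachingLineGraph

/-- Let `L` be a caching line graph with vertex set `Vset ⊆ 𝒦 × 𝒻` and
edges exactly between distinct vertices sharing the first coordinate or the second
coordinate (but not both). Then `{(k₁,f₁),(k₂,f₂)}` (with both in `Vset`) is an edge of
the complement of `L²` iff `k₁ ≠ k₂`, `f₁ ≠ f₂`, `(k₁,f₂) ∉ Vset` and `(k₂,f₁) ∉ Vset`. -/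
theorem stmt_16 (𝒦 𝒻 : Type)
    (Vset : Set (𝒦 × 𝒻))
    (L : SimpleGraph (𝒦 × 𝒻))
    (hL : ∀ u v, L.Adj u v ↔ u ≠ v ∧ u ∈ Vset ∧ v ∈ Vset ∧ (u.1 = v.1 ∨ u.2 = v.2))
    (k1 k2 : 𝒦) (f1 f2 : 𝒻)
    (h1 : (k1, f1) ∈ Vset) (h2 : (k2, f2) ∈ Vset) :
    (sqGraph L)ᶜ.Adj (k1, f1) (k2, f2) ↔
      k1 ≠ k2 ∧ f1 ≠ f2 ∧ (k1, f2) ∉ Vset ∧ (k2, f1) ∉ Vset := by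
  rw [SimpleGraph.compl_adj]
  constructor
  · rintro ⟨hne, hsq⟩
    rw [sqGraph_adj_iff_of_lineGraph hL h1 h2 hne] at hsq
    simpa only [not_or] using hsq
  · rintro ⟨hk, hf, hc1, hc2⟩
    have hne : (k1, f1) ≠ (k2, f2) := fun h => hk (congrArg Prod.fst h)
    rw [sqGraph_adj_iff_of_lineGraph hL h1 h2 hne]
    simp only [not_or]
    exact ⟨hne, hk, hf, hc1, hc2⟩
end

section
/- For a prime power $q$ and integers with $m = k - t - \alpha$ where $\alpha \ge 2$ is constant, let $F = \binom{k-t+1}{m+1}_q \frac{\prod_{i=0}^m (q^{m+1}-q^i)}{(m+1)!(q-1)^{m+1}}$ and $K = \frac{q}{2}\binom{k-t+1}{1}_q\binom{k-t}{1}_q$. Then $\frac{F}{K} = \frac{2 q^{m-1} \prod_{i=1}^{m-1} q^i}{(m+1)!} \prod_{i=1}^{m-1}\binom{k-t-i}{1}_q$, and consequently $F \le \frac{2K}{(m+1)!} q^{(k-t+1)(m-1)}$, so $F = q^{O((\log_q K)^2)}$ as $k-t \to \infty$. -/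
/-- The number of users `K = (q/2)·[k-t+1,1]_q·[k-t,1]_q` as a real number. -/
noncomputable def Kval (q k t : ℕ) : ℝ :=
  (q : ℝ) / 2 * (((q : ℝ) ^ (k - t + 1) - 1) / ((q : ℝ) - 1)) *
    (((q : ℝ) ^ (k - t) - 1) / ((q : ℝ) - 1))

/-- The subpacketization
`F = [k-t+1, m+1]_q · ∏_{i=0}^m (q^{m+1} - q^i) / ((m+1)!(q-1)^{m+1})`
as a real number, where the Gaussian binomial is written as
`∏_{i=0}^{m} (q^{k-t+1-i}-1)/(q^{m+1-i}-1)`. -/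
noncomputable def Fval (q k m t : ℕ) : ℝ :=
  (∏ i ∈ Finset.range (m + 1),
      (((q : ℝ) ^ (k - t + 1 - i) - 1) / ((q : ℝ) ^ (m + 1 - i) - 1))) *
    ((∏ i ∈ Finset.range (m + 1), ((q : ℝ) ^ (m + 1) - (q : ℝ) ^ i)) /
      ((Nat.factorial (m + 1) : ℝ) * ((q : ℝ) - 1) ^ (m + 1)))

lemma peel2 (f : ℕ → ℝ) (n : ℕ) :
    ∏ i ∈ Finset.range (n + 2), f i = f 0 * f 1 * ∏ i ∈ Finset.range n, f (i + 2) := by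
  rw [Finset.prod_range_succ', Finset.prod_range_succ']
  simp only [add_assoc]
  ring

lemma Fval_closed (q k m t : ℕ) (hq : 2 ≤ q) (hm : 1 ≤ m) (hkt : m + 2 ≤ k - t) :
    Fval q k m t =
      ((q:ℝ)^(k-t+1) - 1) * ((q:ℝ)^(k-t) - 1) *
        (∏ i ∈ Finset.range (m-1), ((q:ℝ)^(k-t-(i+1)) - 1)) *
        ((q:ℝ) * (q:ℝ)^(m-1) * ∏ i ∈ Finset.range (m-1), (q:ℝ)^(i+1)) /
        ((Nat.factorial (m+1) : ℝ) * ((q:ℝ)-1)^(m+1)) := by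
  have hQ1 : (1:ℝ) < (q:ℝ) := by exact_mod_cast Nat.lt_of_lt_of_le one_lt_two hq
  have hQ0 : (0:ℝ) < (q:ℝ) := by linarith
  have hpow : ∀ n : ℕ, 1 ≤ n → (0:ℝ) < (q:ℝ)^n - 1 := by
    intro n hn
    have : (q:ℝ)^1 ≤ (q:ℝ)^n := pow_le_pow_right₀ hQ1.le hn
    simp only [pow_one] at this
    linarith
  obtain ⟨n, rfl⟩ : ∃ n, m = n + 1 := ⟨m - 1, by omega⟩
  unfold Fval
  rw [Finset.prod_div_distrib]
  have h2 : ∏ i ∈ Finset.range (n + 1 + 1), ((q:ℝ)^(n+1+1) - (q:ℝ)^i)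
      = (∏ i ∈ Finset.range (n + 1 + 1), (q:ℝ)^i) *
        ∏ i ∈ Finset.range (n + 1 + 1), ((q:ℝ)^(n+1+1-i) - 1) := by
    rw [← Finset.prod_mul_distrib]
    refine Finset.prod_congr rfl fun i hi => ?_
    have hi' : i ≤ n + 1 := by simpa [Nat.lt_succ_iff] using hi
    rw [mul_sub, mul_one, ← pow_add]
    congr 2
    omega
  rw [h2]
  have hPden : (∏ i ∈ Finset.range (n + 1 + 1), ((q:ℝ)^(n+1+1-i) - 1)) ≠ 0 := by
    refine Finset.prod_ne_zero_iff.2 fun i hi => ?_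
    have hi' : i ≤ n + 1 := by simpa [Nat.lt_succ_iff] using hi
    exact ne_of_gt (hpow _ (by omega))
  have hf : ((Nat.factorial (n + 1 + 1) : ℝ)) ≠ 0 := by positivity
  have hQm1 : ((q:ℝ) - 1) ≠ 0 := by intro h; linarith [hpow 1 le_rfl]
  have hPnum : (∏ i ∈ Finset.range (n + 1 + 1), ((q:ℝ)^(k-t+1-i) - 1))
      = ((q:ℝ)^(k-t+1) - 1) * ((q:ℝ)^(k-t) - 1) *
        ∏ i ∈ Finset.range n, ((q:ℝ)^(k-t-(i+1)) - 1) := by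
    rw [show n + 1 + 1 = n + 2 from rfl, peel2,
      show k - t + 1 - 0 = k - t + 1 by omega, show k - t + 1 - 1 = k - t by omega]
    congr 1
    refine Finset.prod_congr rfl fun i hi => ?_
    rw [show k - t + 1 - (i + 2) = k - t - (i + 1) by omega]
  have hPQ : (∏ i ∈ Finset.range (n + 1 + 1), (q:ℝ)^i)
      = (q:ℝ) * (q:ℝ)^n * ∏ i ∈ Finset.range n, (q:ℝ)^(i+1) := by
    rw [show n + 1 + 1 = n + 2 from rfl, peel2]
    have : ∀ i ∈ Finset.range n, (q:ℝ)^(i+2) = (q:ℝ)^(i+1) * (q:ℝ) := by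
      intro i _; rw [← pow_succ]
    rw [Finset.prod_congr rfl this, Finset.prod_mul_distrib, Finset.prod_const]
    simp only [Finset.card_range, pow_zero, pow_one]
    ring
  rw [hPnum, hPQ]
  simp only [Nat.add_sub_cancel]
  field_simp

set_option maxHeartbeats 2000000 in
/-- With `m = k - t - α` for a fixed constant `α ≥ 2`, the ratio `F/K`
equals `2 q^{m-1} (∏_{i=1}^{m-1} q^i) / (m+1)! · ∏_{i=1}^{m-1} [k-t-i,1]_q`; consequently
`F ≤ 2K/(m+1)! · q^{(k-t+1)(m-1)}`, so `F = q^{O((log_q K)²)}` as `k - t → ∞`. -/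
theorem stmt_18 (q α : ℕ) (hq : IsPrimePow q) (hα : 2 ≤ α) :
    (∀ k t m : ℕ, 1 ≤ t → 1 ≤ m → k = t + m + α →
      Fval q k m t / Kval q k t =
        2 * (q : ℝ) ^ (m - 1) * (∏ i ∈ Finset.range (m - 1), (q : ℝ) ^ (i + 1)) /
          (Nat.factorial (m + 1) : ℝ) *
          ∏ i ∈ Finset.range (m - 1), (((q : ℝ) ^ (k - t - (i + 1)) - 1) / ((q : ℝ) - 1)) ∧
      Fval q k m t ≤ 2 * Kval q k t / (Nat.factorial (m + 1) : ℝ) *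
          (q : ℝ) ^ ((k - t + 1) * (m - 1))) ∧
    ∃ C : ℝ, 0 < C ∧ ∃ N : ℕ, ∀ k t m : ℕ, 1 ≤ t → 1 ≤ m → k = t + m + α → N ≤ k - t →
      Real.logb q (Fval q k m t) ≤ C * (Real.logb q (Kval q k t)) ^ 2 := by
  have hq2 : 2 ≤ q := hq.two_le
  have hQ1 : (1:ℝ) < (q:ℝ) := by exact_mod_cast Nat.lt_of_lt_of_le one_lt_two hq2
  have hQ0 : (0:ℝ) < (q:ℝ) := by linarith
  have hQ2 : (2:ℝ) ≤ (q:ℝ) := by exact_mod_cast hq2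
  have hpow : ∀ n : ℕ, 1 ≤ n → (0:ℝ) < (q:ℝ)^n - 1 := by
    intro n hn
    have : (q:ℝ)^1 ≤ (q:ℝ)^n := pow_le_pow_right₀ hQ1.le hn
    simp only [pow_one] at this
    linarith
  have hQm1 : (0:ℝ) < (q:ℝ) - 1 := by linarith
  -- main facts, proved once
  have main : ∀ k t m : ℕ, 1 ≤ t → 1 ≤ m → k = t + m + α →
      (Fval q k m t / Kval q k t =
        2 * (q : ℝ) ^ (m - 1) * (∏ i ∈ Finset.range (m - 1), (q : ℝ) ^ (i + 1)) /
          (Nat.factorial (m + 1) : ℝ) *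
          ∏ i ∈ Finset.range (m - 1), (((q : ℝ) ^ (k - t - (i + 1)) - 1) / ((q : ℝ) - 1))) ∧
      0 < Kval q k t ∧ 0 < Fval q k m t ∧
      Fval q k m t ≤ Kval q k t * (q : ℝ) ^ ((k - t + 1) * (m - 1)) ∧
      Fval q k m t ≤ 2 * Kval q k t / (Nat.factorial (m + 1) : ℝ) *
          (q : ℝ) ^ ((k - t + 1) * (m - 1)) := by
    intro k t m ht hm hk
    have hkt : m + 2 ≤ k - t := by omega
    have hK : 0 < Kval q k t := by
      unfold Kval
      have h1 := hpow (k - t + 1) (by omega)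
      have h2 := hpow (k - t) (by omega)
      positivity
    have hf2 : (2:ℝ) ≤ (Nat.factorial (m+1) : ℝ) := by
      exact_mod_cast Nat.le_trans (by omega) (Nat.self_le_factorial (m+1))
    have hf0 : (0:ℝ) < (Nat.factorial (m+1) : ℝ) := by linarith
    have hP1w : 0 < ∏ i ∈ Finset.range (m - 1),
        (((q : ℝ) ^ (k - t - (i + 1)) - 1) / ((q : ℝ) - 1)) := by
      refine Finset.prod_pos fun i hi => ?_
      have hi' : i < m - 1 := Finset.mem_range.mp hi
      exact div_pos (hpow _ (by omega)) hQm1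
    have hP2 : (0:ℝ) < ∏ i ∈ Finset.range (m - 1), (q : ℝ) ^ (i + 1) := by positivity
    -- the identity
    have hid : Fval q k m t / Kval q k t =
        2 * (q : ℝ) ^ (m - 1) * (∏ i ∈ Finset.range (m - 1), (q : ℝ) ^ (i + 1)) /
          (Nat.factorial (m + 1) : ℝ) *
          ∏ i ∈ Finset.range (m - 1), (((q : ℝ) ^ (k - t - (i + 1)) - 1) / ((q : ℝ) - 1)) := by
      rw [div_eq_iff (ne_of_gt hK), Fval_closed q k m t hq2 hm hkt]
      unfold Kval
      rw [Finset.prod_div_distrib, Finset.prod_const, Finset.card_range,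
        show ((q:ℝ)-1)^(m+1) = ((q:ℝ)-1)^(m-1) * ((q:ℝ)-1)^2 by
          rw [← pow_add]; congr 1; omega]
      have h1 := hpow (k - t + 1) (by omega)
      have h2 := hpow (k - t) (by omega)
      field_simp
    refine ⟨hid, hK, ?_, ?_, ?_⟩
    · -- positivity of F
      have := hid
      have hR : 0 < 2 * (q : ℝ) ^ (m - 1) * (∏ i ∈ Finset.range (m - 1), (q : ℝ) ^ (i + 1)) /
          (Nat.factorial (m + 1) : ℝ) *
          ∏ i ∈ Finset.range (m - 1), (((q : ℝ) ^ (k - t - (i + 1)) - 1) / ((q : ℝ) - 1)) := by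
        positivity
      have : 0 < Fval q k m t / Kval q k t := hid ▸ hR
      exact (div_pos_iff.mp this).resolve_right (fun h => absurd hK (by linarith [h.2])) |>.1
    all_goals {
      -- common bound work
      have hFeq : Fval q k m t =
          2 * (q : ℝ) ^ (m - 1) * (∏ i ∈ Finset.range (m - 1), (q : ℝ) ^ (i + 1)) /
            (Nat.factorial (m + 1) : ℝ) *
            (∏ i ∈ Finset.range (m - 1), (((q : ℝ) ^ (k - t - (i + 1)) - 1) / ((q : ℝ) - 1))) *
            Kval q k t := by
        field_simp [ne_of_gt hK] at hid ⊢
        linarith [hid]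
      have hbound : (∏ i ∈ Finset.range (m-1), (q:ℝ)^(i+1)) *
          (∏ i ∈ Finset.range (m-1), (((q:ℝ)^(k-t-(i+1)) - 1)/((q:ℝ)-1)))
          ≤ (q:ℝ)^((k-t)*(m-1)) := by
        rw [← Finset.prod_mul_distrib]
        calc ∏ i ∈ Finset.range (m-1), ((q:ℝ)^(i+1) * (((q:ℝ)^(k-t-(i+1)) - 1)/((q:ℝ)-1)))
            ≤ ∏ i ∈ Finset.range (m-1), (q:ℝ)^(k-t) := by
              refine Finset.prod_le_prod (fun i hi => ?_) (fun i hi => ?_)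
              · have hi' : i < m - 1 := Finset.mem_range.mp hi
                have := hpow (k-t-(i+1)) (by omega)
                positivity
              · have hi' : i < m - 1 := Finset.mem_range.mp hi
                have h1 : ((q:ℝ)^(k-t-(i+1)) - 1)/((q:ℝ)-1) ≤ (q:ℝ)^(k-t-(i+1)) := by
                  have := hpow (k-t-(i+1)) (by omega)
                  calc ((q:ℝ)^(k-t-(i+1)) - 1)/((q:ℝ)-1) ≤ (q:ℝ)^(k-t-(i+1)) - 1 :=
                        div_le_self (by linarith) (by linarith)
                    _ ≤ (q:ℝ)^(k-t-(i+1)) := by linarith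
                calc (q:ℝ)^(i+1) * (((q:ℝ)^(k-t-(i+1)) - 1)/((q:ℝ)-1))
                    ≤ (q:ℝ)^(i+1) * (q:ℝ)^(k-t-(i+1)) :=
                      mul_le_mul_of_nonneg_left h1 (by positivity)
                  _ = (q:ℝ)^(k-t) := by rw [← pow_add]; congr 1; omega
          _ = (q:ℝ)^((k-t)*(m-1)) := by
              rw [Finset.prod_const, Finset.card_range, ← pow_mul]
      have hstep : Fval q k m t ≤ 2 * Kval q k t / (Nat.factorial (m + 1) : ℝ) *
          (q : ℝ) ^ ((k - t + 1) * (m - 1)) := by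
        rw [hFeq]
        have hE : (q:ℝ) ^ ((k - t + 1) * (m - 1)) = (q:ℝ)^(m-1) * (q:ℝ)^((k-t)*(m-1)) := by
          rw [← pow_add]; congr 1; ring
        rw [hE]
        have key : (∏ i ∈ Finset.range (m-1), (q:ℝ)^(i+1)) *
            (∏ i ∈ Finset.range (m-1), (((q:ℝ)^(k-t-(i+1)) - 1)/((q:ℝ)-1))) * Kval q k t
            ≤ (q:ℝ)^((k-t)*(m-1)) * Kval q k t :=
          mul_le_mul_of_nonneg_right hbound hK.le
        calc 2 * (q : ℝ) ^ (m - 1) * (∏ i ∈ Finset.range (m - 1), (q : ℝ) ^ (i + 1)) /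
              (Nat.factorial (m + 1) : ℝ) *
              (∏ i ∈ Finset.range (m - 1), (((q : ℝ) ^ (k - t - (i + 1)) - 1) / ((q : ℝ) - 1))) *
              Kval q k t
            = 2 * (q:ℝ)^(m-1) / (Nat.factorial (m+1) : ℝ) *
              ((∏ i ∈ Finset.range (m-1), (q:ℝ)^(i+1)) *
               (∏ i ∈ Finset.range (m-1), (((q:ℝ)^(k-t-(i+1)) - 1)/((q:ℝ)-1))) * Kval q k t) := by
              ring
          _ ≤ 2 * (q:ℝ)^(m-1) / (Nat.factorial (m+1) : ℝ) *
              ((q:ℝ)^((k-t)*(m-1)) * Kval q k t) := by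
              refine mul_le_mul_of_nonneg_left key (by positivity)
          _ = 2 * Kval q k t / (Nat.factorial (m + 1) : ℝ) *
              ((q:ℝ)^(m-1) * (q:ℝ)^((k-t)*(m-1))) := by ring
      first
        | exact hstep
        | calc Fval q k m t ≤ 2 * Kval q k t / (Nat.factorial (m + 1) : ℝ) *
              (q : ℝ) ^ ((k - t + 1) * (m - 1)) := hstep
            _ ≤ Kval q k t * (q : ℝ) ^ ((k - t + 1) * (m - 1)) := by
              refine mul_le_mul_of_nonneg_right ?_ (by positivity)
              rw [div_le_iff₀ hf0]
              nlinarith [hK]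
    }
  constructor
  · intro k t m ht hm hk
    obtain ⟨h1, _, _, _, h5⟩ := main k t m ht hm hk
    exact ⟨h1, h5⟩
  · refine ⟨3, by norm_num, 1, fun k t m ht hm hk hN => ?_⟩
    obtain ⟨_, hK, hF0, h4, _⟩ := main k t m ht hm hk
    have hkt : m + 2 ≤ k - t := by omega
    -- lower bound on K
    have hKlb : (q:ℝ)^(k-t) ≤ Kval q k t := by
      unfold Kval
      have h1 : (q:ℝ)^(k-t) ≤ ((q:ℝ)^(k-t+1) - 1)/((q:ℝ)-1) := by
        rw [le_div_iff₀ hQm1]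
        have h := one_le_pow₀ (n := k-t) hQ1.le
        have : (q:ℝ)^(k-t+1) = (q:ℝ)^(k-t) * (q:ℝ) := by rw [pow_succ]
        nlinarith
      have h2 : (1:ℝ) ≤ ((q:ℝ)^(k-t) - 1)/((q:ℝ)-1) := by
        rw [le_div_iff₀ hQm1]
        have : (q:ℝ)^1 ≤ (q:ℝ)^(k-t) := pow_le_pow_right₀ hQ1.le (by omega)
        simp only [pow_one] at this
        linarith
      have h3 : (1:ℝ) ≤ (q:ℝ)/2 := by linarith
      calc (q:ℝ)^(k-t) = 1 * (q:ℝ)^(k-t) * 1 := by ring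
        _ ≤ (q:ℝ)/2 * (((q:ℝ)^(k-t+1) - 1)/((q:ℝ)-1)) * (((q:ℝ)^(k-t) - 1)/((q:ℝ)-1)) := by
            have hx : (0:ℝ) ≤ (q:ℝ)^(k-t) := by positivity
            have h0 : (0:ℝ) ≤ (q:ℝ)/2 * (((q:ℝ)^(k-t+1) - 1)/((q:ℝ)-1)) :=
              mul_nonneg (by linarith) (le_of_lt (div_pos (hpow _ (by omega)) hQm1))
            have := mul_le_mul (mul_le_mul h3 h1 hx (by linarith)) h2 (by norm_num) h0
            simpa using this
    set L := Real.logb q (Kval q k t) with hL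
    have hLs : ((k-t : ℕ):ℝ) ≤ L := by
      have := (Real.logb_le_logb hQ1 (by positivity) hK).mpr hKlb
      rwa [Real.logb_pow, Real.logb_self_eq_one hQ1, mul_one] at this
    have hL1 : (1:ℝ) ≤ L := le_trans (by exact_mod_cast (by omega : 1 ≤ k - t)) hLs
    have hlogF : Real.logb q (Fval q k m t) ≤ L + ((k-t+1)*(m-1) : ℕ) := by
      have := (Real.logb_le_logb hQ1 hF0 (by positivity : (0:ℝ) <
        Kval q k t * (q:ℝ)^((k-t+1)*(m-1)))).mpr h4
      rwa [Real.logb_mul (ne_of_gt hK) (by positivity), Real.logb_pow,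
        Real.logb_self_eq_one hQ1, mul_one] at this
    have he : (((k-t+1)*(m-1) : ℕ) : ℝ) ≤ 2 * L^2 := by
      have hnat : (k-t+1)*(m-1) ≤ 2 * ((k-t) * (k-t)) := by
        have h1 : k-t+1 ≤ 2*(k-t) := by omega
        have h2 : m-1 ≤ k-t := by omega
        calc (k-t+1)*(m-1) ≤ (2*(k-t))*(k-t) := Nat.mul_le_mul h1 h2
          _ = 2*((k-t)*(k-t)) := by ring
      have hcast : (((k-t+1)*(m-1) : ℕ) : ℝ) ≤ 2 * (((k-t:ℕ):ℝ) * ((k-t:ℕ):ℝ)) := by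
        exact_mod_cast hnat
      have hsq : ((k-t:ℕ):ℝ) * ((k-t:ℕ):ℝ) ≤ L^2 := by
        have h0 : (0:ℝ) ≤ ((k-t:ℕ):ℝ) := by positivity
        calc ((k-t:ℕ):ℝ) * ((k-t:ℕ):ℝ) ≤ L * L := mul_le_mul hLs hLs h0 (le_trans h0 hLs)
          _ = L^2 := (pow_two L).symm
      linarith
    have hLL : L ≤ L^2 := le_self_pow₀ hL1 (by norm_num)
    calc Real.logb q (Fval q k m t) ≤ L + ((k-t+1)*(m-1) : ℕ) := hlogF
      _ ≤ L^2 + 2*L^2 := by push_cast at he ⊢; linarith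
      _ = 3 * L^2 := by ring
end
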